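/- arXiv:2407.02153 — 6 statements merged into one kernel-verified Lean document; each statement's English description precedes it below -/
import Mathlib

section
/- If y is the linear interpolant of a C² function u on [a,b], then the integral over [a,b] of (y(x)-u(x))² dx is at most (1/120)(b-a)⁵ times the square of the maximum of |u''| on [a,b]. -/
open Set

private lemma pt_bound_stmt2 (u : ℝ → ℝ) (a b : ℝ) (hab : a < b) (hba : b - a ≠ 0)
    (hud : ∀ t ∈ Set.Ioo a b, HasDerivAt u (deriv u t) t)
    (hcont_u : ContinuousOn u (Set.Icc a b))
    (hcontd : ContinuousOn (deriv u) (Set.Ioo a b))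
    (heq2 : ∀ t ∈ Set.Ioo a b, HasDerivAt (deriv u) (deriv (deriv u) t) t)
    (M : ℝ) (hM : ∀ ξ ∈ Set.Ioo a b, |deriv (deriv u) ξ| ≤ M)
    (x : ℝ) (hx : x ∈ Set.Ioo a b) :
    |u x - (u a + (u b - u a) * (x - a) / (b - a))| ≤ M / 2 * ((x - a) * (b - x)) := by
  obtain ⟨hax, hxb⟩ := hx
  obtain ⟨L, hL⟩ : ∃ L : ℝ, L = (u b - u a) / (b - a) := ⟨_, rfl⟩
  have hprod : (x - a) * (b - x) ≠ 0 :=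
    mul_ne_zero (sub_ne_zero.mpr hax.ne') (sub_ne_zero.mpr hxb.ne')
  obtain ⟨c, hc⟩ : ∃ c : ℝ, c = (u x - (u a + L * (x - a))) / ((x - a) * (b - x)) := ⟨_, rfl⟩
  obtain ⟨g, hg⟩ : ∃ g : ℝ → ℝ, g = fun t => u t - (u a + L * (t - a)) - c * ((t - a) * (b - t)) :=
    ⟨_, rfl⟩
  obtain ⟨g', hg'def⟩ : ∃ g' : ℝ → ℝ, g' = fun t => deriv u t - L - c * (a + b - 2 * t) := ⟨_, rfl⟩
  have hga : g a = 0 := by simp [hg]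
  have hgb : g b = 0 := by
    simp only [hg, hL]
    field_simp
    ring
  have hgx : g x = 0 := by
    simp only [hg, hc]
    field_simp
    ring
  have hg'at : ∀ t ∈ Set.Ioo a b, HasDerivAt g (g' t) t := by
    intro t ht
    have h1 : HasDerivAt (fun t : ℝ => u a + L * (t - a)) L t := by
      simpa using (((hasDerivAt_id t).sub_const a).const_mul L).const_add (u a)
    have h2 : HasDerivAt (fun t : ℝ => c * ((t - a) * (b - t))) (c * (a + b - 2 * t)) t := by
      have h := (((hasDerivAt_id t).sub_const a).mul
        ((hasDerivAt_const t b).sub (hasDerivAt_id t))).const_mul c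
      exact h.congr_deriv (by simp only [Pi.sub_apply, id_eq]; ring)
    rw [hg, hg'def]
    exact ((hud t ht).sub h1).sub h2
  have hgcont : ContinuousOn g (Set.Icc a b) := by
    rw [hg]
    exact (hcont_u.sub (by fun_prop)).sub (by fun_prop)
  obtain ⟨c1, hc1, hgc1⟩ := exists_hasDerivAt_eq_zero hax
    (hgcont.mono (Icc_subset_Icc le_rfl hxb.le)) (hga.trans hgx.symm)
    (fun t ht => hg'at t ⟨ht.1, ht.2.trans hxb⟩)
  obtain ⟨c2, hc2, hgc2⟩ := exists_hasDerivAt_eq_zero hxb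
    (hgcont.mono (Icc_subset_Icc hax.le le_rfl)) (hgx.trans hgb.symm)
    (fun t ht => hg'at t ⟨hax.trans ht.1, ht.2⟩)
  have hc12 : c1 < c2 := hc1.2.trans hc2.1
  have hsub : Set.Icc c1 c2 ⊆ Set.Ioo a b := fun t ht =>
    ⟨hc1.1.trans_le ht.1, ht.2.trans_lt hc2.2⟩
  have hg'cont : ContinuousOn g' (Set.Icc c1 c2) := by
    rw [hg'def]
    exact ((hcontd.mono hsub).sub (by fun_prop)).sub (by fun_prop)
  have hg''at : ∀ t ∈ Set.Ioo c1 c2, HasDerivAt g' (deriv (deriv u) t + 2 * c) t := by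
    intro t ht
    have ht' : t ∈ Set.Ioo a b := hsub (Ioo_subset_Icc_self ht)
    have h2 : HasDerivAt (fun t : ℝ => c * (a + b - 2 * t)) (-(2 * c)) t := by
      have h := (((hasDerivAt_const t (a + b)).sub
        ((hasDerivAt_id t).const_mul 2))).const_mul c
      exact h.congr_deriv (by ring)
    have h := ((heq2 t ht').sub_const L).sub h2
    rw [hg'def]
    exact h.congr_deriv (by ring)
  obtain ⟨ξ, hξ, hξ0⟩ := exists_hasDerivAt_eq_zero hc12 hg'cont
    (hgc1.trans hgc2.symm) hg''at
  have hξab : ξ ∈ Set.Ioo a b := hsub (Ioo_subset_Icc_self hξ)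
  have hcbound : |c| ≤ M / 2 := by
    have h1 : c = -(deriv (deriv u) ξ) / 2 := by linarith
    rw [h1, abs_div, abs_neg, abs_of_pos (by norm_num : (0:ℝ) < 2)]
    have := hM ξ hξab
    linarith
  have huxy : u x - (u a + (u b - u a) * (x - a) / (b - a)) = c * ((x - a) * (b - x)) := by
    rw [hc, div_mul_cancel₀ _ hprod, hL]
    ring
  have hpp : (0:ℝ) ≤ (x - a) * (b - x) :=
    le_of_lt (mul_pos (by linarith) (by linarith))
  rw [huxy, abs_mul, abs_of_nonneg hpp]
  exact mul_le_mul_of_nonneg_right hcbound hpp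

private lemma poly_int_stmt2 (a b : ℝ) :
    ∫ x in a..b, ((x - a) * (b - x))^2 = (b - a)^5 / 30 := by
  have key : ∀ x ∈ Set.uIcc a b, HasDerivAt
      (fun x : ℝ => (b-a)^2 * (x-a)^3 / 3 - (b-a) * (x-a)^4 / 2 + (x-a)^5 / 5)
      (((x - a) * (b - x))^2) x := by
    intro x _
    have h1 : HasDerivAt (fun x : ℝ => x - a) 1 x := (hasDerivAt_id x).sub_const a
    have h := ((((h1.pow 3).const_mul ((b-a)^2)).div_const 3).sub
      (((h1.pow 4).const_mul (b-a)).div_const 2)).add ((h1.pow 5).div_const 5)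
    exact h.congr_deriv (by ring)
  rw [intervalIntegral.integral_eq_sub_of_hasDerivAt key
    (Continuous.intervalIntegrable (by fun_prop) a b)]
  ring

theorem stmt_2 (u : ℝ → ℝ) (a b : ℝ) (hab : a < b)
    (hu : ContDiffOn ℝ 2 u (Set.Icc a b))
    (y : ℝ → ℝ)
    (hy : ∀ x, y x = u a + (u b - u a) * (x - a) / (b - a)) :
    ∫ x in a..b, (y x - u x)^2 ≤
      (1/120) * (b - a)^5 * (⨆ ξ : Set.Icc a b, |deriv (deriv u) ξ|)^2 := by
  have hba : b - a ≠ 0 := sub_ne_zero.mpr hab.ne'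
  have us : UniqueDiffOn ℝ (Set.Icc a b) := uniqueDiffOn_Icc hab
  obtain ⟨f1, hf1⟩ : ∃ f : ℝ → ℝ, f = derivWithin u (Set.Icc a b) := ⟨_, rfl⟩
  have hu1 : ContDiffOn ℝ 1 f1 (Set.Icc a b) := hf1 ▸ hu.derivWithin us (by norm_num)
  have hcont_u : ContinuousOn u (Set.Icc a b) := hu.continuousOn
  have hdiff_u : DifferentiableOn ℝ u (Set.Icc a b) := hu.differentiableOn (by norm_num)
  have hdiff_f1 : DifferentiableOn ℝ f1 (Set.Icc a b) := hu1.differentiableOn (by norm_num)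
  have hcont_f1 : ContinuousOn f1 (Set.Icc a b) := hu1.continuousOn
  obtain ⟨f2, hf2⟩ : ∃ f : ℝ → ℝ, f = derivWithin f1 (Set.Icc a b) := ⟨_, rfl⟩
  have hcont_f2 : ContinuousOn f2 (Set.Icc a b) := by
    have h0 : ContDiffOn ℝ 0 (derivWithin f1 (Set.Icc a b)) (Set.Icc a b) :=
      hu1.derivWithin us (by norm_num)
    exact hf2 ▸ h0.continuousOn
  have hnhds : ∀ t ∈ Set.Ioo a b, Set.Icc a b ∈ nhds t := fun t ht => Icc_mem_nhds ht.1 ht.2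
  have hud : ∀ t ∈ Set.Ioo a b, HasDerivAt u (deriv u t) t := fun t ht =>
    (hdiff_u.differentiableAt (hnhds t ht)).hasDerivAt
  have heq1 : ∀ t ∈ Set.Ioo a b, deriv u t = f1 t := fun t ht =>
    hf1 ▸ (derivWithin_of_mem_nhds (hnhds t ht)).symm
  have hcontd : ContinuousOn (deriv u) (Set.Ioo a b) :=
    (hcont_f1.mono Ioo_subset_Icc_self).congr heq1
  have hev : ∀ t ∈ Set.Ioo a b, deriv u =ᶠ[nhds t] f1 := fun t ht =>
    Filter.eventuallyEq_of_mem (Ioo_mem_nhds ht.1 ht.2) heq1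
  have heq2 : ∀ t ∈ Set.Ioo a b, HasDerivAt (deriv u) (deriv (deriv u) t) t := by
    intro t ht
    have hd : HasDerivAt f1 (deriv f1 t) t :=
      (hdiff_f1.differentiableAt (hnhds t ht)).hasDerivAt
    have hd' : HasDerivAt (deriv u) (deriv f1 t) t := hd.congr_of_eventuallyEq (hev t ht)
    rwa [← (hev t ht).deriv_eq] at hd'
  have heqf2 : ∀ t ∈ Set.Ioo a b, deriv (deriv u) t = f2 t := by
    intro t ht
    rw [(hev t ht).deriv_eq, hf2, derivWithin_of_mem_nhds (hnhds t ht)]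
  set M := ⨆ ξ : Set.Icc a b, |deriv (deriv u) (ξ : ℝ)| with hMdef
  have hM0 : 0 ≤ M := Real.iSup_nonneg fun ξ => abs_nonneg _
  have hbdd : BddAbove (Set.range fun ξ : Set.Icc a b => |deriv (deriv u) (ξ : ℝ)|) := by
    obtain ⟨C, hC⟩ := isCompact_Icc.exists_bound_of_continuousOn hcont_f2
    refine ⟨max C (max |deriv (deriv u) a| |deriv (deriv u) b|), ?_⟩
    rintro v ⟨⟨ξ, hξ⟩, rfl⟩
    rcases eq_or_lt_of_le hξ.1 with h1 | h1
    · simp only [← h1]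
      exact le_max_of_le_right (le_max_left _ _)
    rcases eq_or_lt_of_le hξ.2 with h2 | h2
    · simp only [h2]
      exact le_max_of_le_right (le_max_right _ _)
    · have hio : ξ ∈ Set.Ioo a b := ⟨h1, h2⟩
      have hCs := hC ξ (Ioo_subset_Icc_self hio)
      rw [Real.norm_eq_abs] at hCs
      calc |deriv (deriv u) ξ| = |f2 ξ| := by rw [heqf2 ξ hio]
        _ ≤ C := hCs
        _ ≤ _ := le_max_left _ _
  have hM : ∀ ξ ∈ Set.Ioo a b, |deriv (deriv u) ξ| ≤ M := fun ξ hξ =>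
    le_ciSup hbdd ⟨ξ, Ioo_subset_Icc_self hξ⟩
  have hpt : ∀ x ∈ Set.Icc a b, (y x - u x)^2 ≤ (M/2)^2 * ((x - a) * (b - x))^2 := by
    intro x hx
    rcases eq_or_lt_of_le hx.1 with h1 | h1
    · rw [← h1, hy]
      simp
    rcases eq_or_lt_of_le hx.2 with h2 | h2
    · rw [h2, hy]
      have e0 : u a + (u b - u a) * (b - a) / (b - a) - u b = 0 := by
        field_simp
        ring
      rw [e0, zero_pow (by norm_num : (2:ℕ) ≠ 0)]
      positivity
    · have hio : x ∈ Set.Ioo a b := ⟨h1, h2⟩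
      have h := pt_bound_stmt2 u a b hab hba hud hcont_u hcontd heq2 M hM x hio
      have he : (y x - u x)^2 = |u x - (u a + (u b - u a) * (x - a) / (b - a))|^2 := by
        rw [sq_abs, hy x]
        ring
      rw [he]
      calc |u x - (u a + (u b - u a) * (x - a) / (b - a))|^2
          ≤ (M / 2 * ((x - a) * (b - x)))^2 := pow_le_pow_left₀ (abs_nonneg _) h 2
        _ = (M/2)^2 * ((x - a) * (b - x))^2 := by ring
  have hyc : Continuous y := by
    have : y = fun x => u a + (u b - u a) * (x - a) / (b - a) := funext hy
    rw [this]
    exact continuous_const.add ((continuous_const.mul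
      (continuous_id.sub continuous_const)).div_const (b - a))
  have hint1 : IntervalIntegrable (fun x => (y x - u x)^2) MeasureTheory.volume a b := by
    apply ContinuousOn.intervalIntegrable
    rw [uIcc_of_le hab.le]
    exact (hyc.continuousOn.sub hcont_u).pow 2
  have hint2 : IntervalIntegrable (fun x => (M/2)^2 * ((x - a) * (b - x))^2)
      MeasureTheory.volume a b := Continuous.intervalIntegrable (by fun_prop) a b
  have hmono := intervalIntegral.integral_mono_on hab.le hint1 hint2 hpt
  have hval : ∫ x in a..b, (M/2)^2 * ((x - a) * (b - x))^2 = (M/2)^2 * ((b - a)^5 / 30) := by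
    rw [intervalIntegral.integral_const_mul, poly_int_stmt2 a b]
  rw [hval] at hmono
  calc ∫ x in a..b, (y x - u x)^2 ≤ (M/2)^2 * ((b - a)^5 / 30) := hmono
    _ = (1/120) * (b - a)^5 * M^2 := by ring
end

section
/- Let 0 = k₀ < k₁ < ... < k_N = 1 be knots and let y be the piecewise linear interpolant of a C² function u at these knots. Then ∫₀¹ (y(x)-u(x))² dx ≤ (1/120) ∑_{i=0}^{N-1} (k_{i+1}-k_i)⁵ · (max_{ξ∈[k_i,k_{i+1}]} |u''(ξ)|)². -/
open Set intervalIntegral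

lemma interp_err (a b x : ℝ) (hx : x ∈ Set.Ioo a b)
    (w w1 w2 : ℝ → ℝ)
    (hwc : ContinuousOn w (Set.Icc a b))
    (hw1c : ContinuousOn w1 (Set.Icc a b))
    (hw : ∀ t ∈ Set.Ioo a b, HasDerivAt w (w1 t) t)
    (hw1 : ∀ t ∈ Set.Ioo a b, HasDerivAt w1 (w2 t) t)
    (ha : w a = 0) (hb : w b = 0) :
    ∃ ξ ∈ Set.Ioo a b, w x = w2 ξ * (x - a) * (x - b) / 2 := by
  obtain ⟨hax, hxb⟩ := hx
  have hab : a < b := hax.trans hxb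
  have hxa : x - a ≠ 0 := sub_ne_zero.2 hax.ne'
  have hxb' : x - b ≠ 0 := sub_ne_zero.2 (ne_of_lt hxb)
  set c : ℝ := w x / ((x - a) * (x - b)) with hc
  have hwx : w x = c * ((x - a) * (x - b)) := by
    rw [hc, div_mul_cancel₀ _ (mul_ne_zero hxa hxb')]
  set φ : ℝ → ℝ := fun t => w t - c * ((t - a) * (t - b)) with hφ
  set φ' : ℝ → ℝ := fun t => w1 t - c * ((t - a) + (t - b)) with hφ'
  have hφd : ∀ t ∈ Set.Ioo a b, HasDerivAt φ (φ' t) t := by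
    intro t ht
    have h1 : HasDerivAt (fun t : ℝ => t - a) 1 t := (hasDerivAt_id t).sub_const a
    have h2 : HasDerivAt (fun t : ℝ => t - b) 1 t := (hasDerivAt_id t).sub_const b
    have := (hw t ht).sub ((h1.mul h2).const_mul c)
    refine this.congr_deriv ?_
    simp only [hφ']; ring
  have hφ'd : ∀ t ∈ Set.Ioo a b, HasDerivAt φ' (w2 t - c * 2) t := by
    intro t ht
    have h1 : HasDerivAt (fun t : ℝ => (t - a) + (t - b)) (1 + 1) t :=
      ((hasDerivAt_id t).sub_const a).add ((hasDerivAt_id t).sub_const b)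
    have := (hw1 t ht).sub (h1.const_mul c)
    refine this.congr_deriv ?_
    ring
  have hφc : ContinuousOn φ (Set.Icc a b) := by
    apply hwc.sub
    fun_prop
  have hφa : φ a = 0 := by simp [hφ, ha]
  have hφb : φ b = 0 := by simp [hφ, hb]
  have hφx : φ x = 0 := by simp [hφ, ← hwx]
  obtain ⟨ξ₁, hξ₁, hξ₁0⟩ := exists_hasDerivAt_eq_zero hax
    (hφc.mono (Set.Icc_subset_Icc le_rfl hxb.le)) (by rw [hφa, hφx])
    (fun t ht => hφd t ⟨ht.1, ht.2.trans hxb⟩)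
  obtain ⟨ξ₂, hξ₂, hξ₂0⟩ := exists_hasDerivAt_eq_zero hxb
    (hφc.mono (Set.Icc_subset_Icc hax.le le_rfl)) (by rw [hφx, hφb])
    (fun t ht => hφd t ⟨hax.trans ht.1, ht.2⟩)
  have hsub : Set.Icc ξ₁ ξ₂ ⊆ Set.Ioo a b := fun t ht =>
    ⟨hξ₁.1.trans_le ht.1, ht.2.trans_lt hξ₂.2⟩
  have hξ12 : ξ₁ < ξ₂ := hξ₁.2.trans hξ₂.1
  have hφ'c : ContinuousOn φ' (Set.Icc ξ₁ ξ₂) := by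
    apply ContinuousOn.sub
    · exact hw1c.mono (fun t ht => Set.Ioo_subset_Icc_self (hsub ht))
    · fun_prop
  obtain ⟨ξ, hξ, hξ0⟩ := exists_hasDerivAt_eq_zero hξ12 hφ'c (by rw [hξ₁0, hξ₂0])
    (fun t ht => hφ'd t (hsub (Set.Ioo_subset_Icc_self ht)))
  refine ⟨ξ, hsub (Set.Ioo_subset_Icc_self hξ), ?_⟩
  have : w2 ξ = 2 * c := by linarith [hξ0]
  rw [this, hwx]; ring

lemma poly_int (a b : ℝ) :
    ∫ x in a..b, ((x-a)*(b-x))^2 = (b-a)^5/30 := by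
  have key : ∀ x : ℝ, HasDerivAt
      (fun x => (b-a)^2/3*(x-a)^3 - (b-a)/2*(x-a)^4 + 1/5*(x-a)^5)
      (((x-a)*(b-x))^2) x := by
    intro x
    have h1 : HasDerivAt (fun x : ℝ => x - a) 1 x := (hasDerivAt_id x).sub_const a
    have h3 := (h1.pow 3).const_mul ((b-a)^2/3)
    have h4 := (h1.pow 4).const_mul ((b-a)/2)
    have h5 := (h1.pow 5).const_mul (1/5 : ℝ)
    have H := (h3.sub h4).add h5
    refine H.congr_deriv ?_
    push_cast; ring
  have heq := intervalIntegral.integral_eq_sub_of_hasDerivAt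
    (a := a) (b := b)
    (fun x _ => key x) (by apply Continuous.intervalIntegrable; fun_prop)
  rw [heq]; ring

lemma interval_bound (u g h : ℝ → ℝ) (a b : ℝ) (hab : a < b)
    (ha0 : 0 ≤ a) (hb1 : b ≤ 1)
    (huc : ContinuousOn u (Set.Icc 0 1))
    (hgc : ContinuousOn g (Set.Icc 0 1))
    (hud : ∀ x ∈ Set.Ioo (0:ℝ) 1, HasDerivAt u (g x) x)
    (hgd : ∀ x ∈ Set.Ioo (0:ℝ) 1, HasDerivAt g (h x) x)
    (hdd : ∀ x ∈ Set.Ioo (0:ℝ) 1, deriv (deriv u) x = h x)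
    (hBdd : BddAbove (Set.range fun ξ : Set.Icc a b => |deriv (deriv u) ξ|))
    (y : ℝ → ℝ) (A B : ℝ)
    (hy : ∀ x ∈ Set.Icc a b, y x = A * x + B)
    (hya : y a = u a) (hyb : y b = u b) :
    ∫ x in a..b, (y x - u x)^2 ≤
      1/120 * ((b - a)^5 * (⨆ ξ : Set.Icc a b, |deriv (deriv u) ξ|)^2) := by
  set M := ⨆ ξ : Set.Icc a b, |deriv (deriv u) ξ.1| with hM
  have hIcc : Set.Icc a b ⊆ Set.Icc 0 1 := Set.Icc_subset_Icc ha0 hb1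
  have hIoo : Set.Ioo a b ⊆ Set.Ioo 0 1 := Set.Ioo_subset_Ioo ha0 hb1
  haveI : Nonempty (Set.Icc a b) := ⟨⟨a, Set.left_mem_Icc.2 hab.le⟩⟩
  have hM0 : 0 ≤ M :=
    le_trans (abs_nonneg _) (le_ciSup hBdd ⟨a, Set.left_mem_Icc.2 hab.le⟩)
  have hpt : ∀ x ∈ Set.Icc a b, (y x - u x)^2 ≤ (M/2 * ((x-a)*(b-x)))^2 := by
    intro x hxI
    have hfac : 0 ≤ (x-a)*(b-x) := mul_nonneg (by linarith [hxI.1]) (by linarith [hxI.2])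
    have key : |y x - u x| ≤ M/2 * ((x-a)*(b-x)) := by
      have hrhs : 0 ≤ M/2 * ((x-a)*(b-x)) :=
        mul_nonneg (div_nonneg hM0 (by norm_num)) hfac
      rcases eq_or_lt_of_le hxI.1 with h0 | h0
      · have hx0 : y x = u x := by rw [← h0]; exact hya
        rw [hx0, sub_self, abs_zero]; exact hrhs
      rcases eq_or_lt_of_le hxI.2 with h1 | h1
      · have hx0 : y x = u x := by rw [h1]; exact hyb
        rw [hx0, sub_self, abs_zero]; exact hrhs
      have hxO : x ∈ Set.Ioo a b := ⟨h0, h1⟩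
      obtain ⟨ξ, hξ, hval⟩ := interp_err a b x hxO
        (fun t => A * t + B - u t) (fun t => A - g t) (fun t => -h t)
        (((continuous_const.mul continuous_id).add continuous_const).continuousOn.sub
          (huc.mono hIcc))
        (continuousOn_const.sub (hgc.mono hIcc))
        (fun t ht => by
          have h1' : HasDerivAt (fun t : ℝ => A * t + B) A t := by
            simpa using ((hasDerivAt_id t).const_mul A).add_const B
          exact h1'.sub (hud t (hIoo ht)))
        (fun t ht => (hgd t (hIoo ht)).const_sub A)
        (by show A * a + B - u a = 0
            rw [← hy a (Set.left_mem_Icc.2 hab.le), hya, sub_self])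
        (by show A * b + B - u b = 0
            rw [← hy b (Set.right_mem_Icc.2 hab.le), hyb, sub_self])
      have hyx : y x = A * x + B := hy x hxI
      have hξ01 : ξ ∈ Set.Ioo (0:ℝ) 1 := hIoo hξ
      have hhM : |h ξ| ≤ M := by
        rw [← hdd ξ hξ01]
        exact le_ciSup hBdd ⟨ξ, Set.Ioo_subset_Icc_self hξ⟩
      have heq : y x - u x = h ξ * ((x-a)*(b-x)) / 2 := by rw [hyx, hval]; ring
      rw [heq, abs_div, abs_mul, abs_of_nonneg hfac, abs_two]
      calc |h ξ| * ((x-a)*(b-x)) / 2 ≤ M * ((x-a)*(b-x)) / 2 := by gcongr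
        _ = M/2 * ((x-a)*(b-x)) := by ring
    calc (y x - u x)^2 = |y x - u x|^2 := (sq_abs _).symm
      _ ≤ (M/2 * ((x-a)*(b-x)))^2 := pow_le_pow_left₀ (abs_nonneg _) key 2
  have hcf : ContinuousOn (fun x => (y x - u x)^2) (Set.Icc a b) := by
    have hc : ContinuousOn (fun x => (A*x+B - u x)^2) (Set.Icc a b) :=
      (((continuous_const.mul continuous_id).add continuous_const).continuousOn.sub
        (huc.mono hIcc)).pow 2
    exact hc.congr (fun x hx => by rw [hy x hx])
  have hcg : Continuous (fun x => (M/2 * ((x-a)*(b-x)))^2) := by fun_prop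
  have hcf' : ContinuousOn (fun x => (y x - u x)^2) (Set.uIcc a b) := by
    rw [Set.uIcc_of_le hab.le]; exact hcf
  have hmono := intervalIntegral.integral_mono_on hab.le
    hcf'.intervalIntegrable (hcg.intervalIntegrable (μ := MeasureTheory.volume) a b) hpt
  calc ∫ x in a..b, (y x - u x)^2 ≤ ∫ x in a..b, (M/2 * ((x-a)*(b-x)))^2 := hmono
    _ = (M/2)^2 * ∫ x in a..b, ((x-a)*(b-x))^2 := by
        simp_rw [mul_pow]; rw [intervalIntegral.integral_const_mul]
    _ = (M/2)^2 * ((b-a)^5/30) := by rw [poly_int]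
    _ = 1/120 * ((b-a)^5 * M^2) := by ring

theorem stmt_3 (N : ℕ) (hN : 1 ≤ N) (k : Fin (N+1) → ℝ)
    (hk : StrictMono k) (hk0 : k 0 = 0) (hkN : k (Fin.last N) = 1)
    (u : ℝ → ℝ) (hu : ContDiffOn ℝ 2 u (Set.Icc 0 1))
    (y : ℝ → ℝ)
    (hyk : ∀ i : Fin (N+1), y (k i) = u (k i))
    (haff : ∀ i : Fin N, ∃ A B : ℝ,
      ∀ x ∈ Set.Icc (k i.castSucc) (k i.succ), y x = A * x + B) :
    ∫ x in (0:ℝ)..1, (y x - u x)^2 ≤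
      (1/120) * ∑ i : Fin N, (k i.succ - k i.castSucc)^5 *
        (⨆ ξ : Set.Icc (k i.castSucc) (k i.succ), |deriv (deriv u) ξ|)^2 := by
  have hS : UniqueDiffOn ℝ (Set.Icc (0:ℝ) 1) := uniqueDiffOn_Icc one_pos
  set g := derivWithin u (Set.Icc (0:ℝ) 1) with hgdef
  have hg1 : ContDiffOn ℝ 1 g (Set.Icc 0 1) := hu.derivWithin hS (m := 1) (by norm_num)
  set h := derivWithin g (Set.Icc (0:ℝ) 1) with hhdef
  have hhc : ContinuousOn h (Set.Icc 0 1) :=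
    (hg1.derivWithin hS (m := 0) (by norm_num)).continuousOn
  have huc : ContinuousOn u (Set.Icc 0 1) := hu.continuousOn
  have hgc : ContinuousOn g (Set.Icc 0 1) := hg1.continuousOn
  have hud : ∀ x ∈ Set.Ioo (0:ℝ) 1, HasDerivAt u (g x) x := by
    intro x hx
    have hnb : Set.Icc (0:ℝ) 1 ∈ nhds x := Icc_mem_nhds hx.1 hx.2
    have hda : DifferentiableAt ℝ u x :=
      ((hu.differentiableOn (by norm_num)) x (Set.Ioo_subset_Icc_self hx)).differentiableAt hnb
    have := hda.hasDerivAt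
    rwa [← derivWithin_of_mem_nhds hnb] at this
  have hgd : ∀ x ∈ Set.Ioo (0:ℝ) 1, HasDerivAt g (h x) x := by
    intro x hx
    have hnb : Set.Icc (0:ℝ) 1 ∈ nhds x := Icc_mem_nhds hx.1 hx.2
    have hda : DifferentiableAt ℝ g x :=
      ((hg1.differentiableOn (by norm_num)) x (Set.Ioo_subset_Icc_self hx)).differentiableAt hnb
    have := hda.hasDerivAt
    rwa [← derivWithin_of_mem_nhds hnb] at this
  have hdd : ∀ x ∈ Set.Ioo (0:ℝ) 1, deriv (deriv u) x = h x := by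
    intro x hx
    have h1 : deriv u =ᶠ[nhds x] g := by
      filter_upwards [isOpen_Ioo.mem_nhds hx] with t ht
      exact (hud t ht).deriv
    rw [h1.deriv_eq]
    exact (hgd x hx).deriv
  obtain ⟨C, hC⟩ := isCompact_Icc.exists_bound_of_continuousOn hhc
  -- endpoint facts
  have hka : ∀ i : Fin N, 0 ≤ k i.castSucc := fun i => by
    rw [← hk0]; exact hk.monotone (Fin.zero_le _)
  have hkb : ∀ i : Fin N, k i.succ ≤ 1 := fun i => by
    rw [← hkN]; exact hk.monotone (Fin.le_last _)
  have hkab : ∀ i : Fin N, k i.castSucc < k i.succ := fun i =>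
    hk (Fin.castSucc_lt_succ (i := i))
  -- boundedness of the second-derivative sup on each cell
  have hBdd : ∀ i : Fin N, BddAbove (Set.range
      fun ξ : Set.Icc (k i.castSucc) (k i.succ) => |deriv (deriv u) ξ|) := by
    intro i
    refine ⟨max C (max |deriv (deriv u) 0| |deriv (deriv u) 1|), ?_⟩
    rintro _ ⟨ξ, rfl⟩
    show |deriv (deriv u) (ξ:ℝ)| ≤ _
    have hmem : (ξ:ℝ) ∈ Set.Icc (0:ℝ) 1 :=
      Set.Icc_subset_Icc (hka i) (hkb i) ξ.2
    by_cases hio : (ξ:ℝ) ∈ Set.Ioo (0:ℝ) 1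
    · rw [hdd ξ hio]
      refine le_max_of_le_left ?_
      have := hC ξ hmem
      rwa [Real.norm_eq_abs] at this
    · have : (ξ:ℝ) = 0 ∨ (ξ:ℝ) = 1 := by
        simp only [Set.mem_Ioo, not_and_or, not_lt] at hio
        rcases hio with h' | h'
        · exact Or.inl (le_antisymm h' hmem.1)
        · exact Or.inr (le_antisymm hmem.2 h')
      rcases this with h' | h'
      · rw [h']; exact le_max_of_le_right (le_max_left _ _)
      · rw [h']; exact le_max_of_le_right (le_max_right _ _)
  -- continuity of the integrand on each cell
  have hsubI : ∀ i : Fin N, Set.Icc (k i.castSucc) (k i.succ) ⊆ Set.Icc (0:ℝ) 1 :=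
    fun i => Set.Icc_subset_Icc (hka i) (hkb i)
  have hint : ∀ i : Fin N,
      ContinuousOn (fun x => (y x - u x)^2) (Set.Icc (k i.castSucc) (k i.succ)) := by
    intro i
    obtain ⟨A, B, hA⟩ := haff i
    have hc : ContinuousOn (fun x => (A*x+B - u x)^2) (Set.Icc (k i.castSucc) (k i.succ)) :=
      (((continuous_const.mul continuous_id).add continuous_const).continuousOn.sub
        (huc.mono (hsubI i))).pow 2
    exact hc.congr (fun x hx => by rw [hA x hx])
  -- the knot sequence as ℕ → ℝ
  set kk : ℕ → ℝ := fun i => k ⟨min i N, Nat.lt_succ_of_le (min_le_right i N)⟩ with hkk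
  have hcast : ∀ i : Fin N, kk i.val = k i.castSucc := by
    intro i
    simp only [hkk]
    congr 1
    ext
    simp [Nat.min_eq_left i.isLt.le]
  have hsucc : ∀ i : Fin N, kk (i.val + 1) = k i.succ := by
    intro i
    simp only [hkk]
    congr 1
    ext
    simp [Nat.min_eq_left (Nat.succ_le_of_lt i.isLt)]
  have hkk0 : kk 0 = 0 := by
    rw [← hk0]
    simp only [hkk]
    congr 1
  have hkkN : kk N = 1 := by
    rw [← hkN]
    simp only [hkk]
    congr 1
    ext
    simp [Fin.last]
  have hsplit : ∫ x in (0:ℝ)..1, (y x - u x)^2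
      = ∑ i ∈ Finset.range N, ∫ x in kk i..kk (i+1), (y x - u x)^2 := by
    rw [intervalIntegral.sum_integral_adjacent_intervals (μ := MeasureTheory.volume) ?h]
    · rw [hkk0, hkkN]
    case h =>
      intro i hi
      have h1 : kk i = k (⟨i, hi⟩ : Fin N).castSucc := hcast ⟨i, hi⟩
      have h2 : kk (i+1) = k (⟨i, hi⟩ : Fin N).succ := hsucc ⟨i, hi⟩
      rw [h1, h2]
      apply ContinuousOn.intervalIntegrable
      rw [Set.uIcc_of_le (hkab ⟨i, hi⟩).le]
      exact hint ⟨i, hi⟩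
  rw [hsplit, Finset.mul_sum]
  rw [← Fin.sum_univ_eq_sum_range (fun i => ∫ x in kk i..kk (i+1), (y x - u x)^2) N]
  apply Finset.sum_le_sum
  intro i _
  obtain ⟨A, B, hA⟩ := haff i
  rw [hcast i, hsucc i]
  exact interval_bound u g h (k i.castSucc) (k i.succ) (hkab i) (hka i) (hkb i)
    huc hgc hud hgd hdd (hBdd i) y A B hA (hyk i.castSucc) (hyk i.succ)
end

section
/- The squared L²-error of the uniform-knot piecewise linear interpolant of u(x) = x^{2/3} on [0,1] is bounded below by c·N^{-7/3} and above by C·N^{-7/3} for positive constants c, C independent of N. -/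
open Set MeasureTheory intervalIntegral

lemma one_div_rpow_eq {z : ℝ} (hz : 0 < z) (p : ℝ) : (1/z)^p = z^(-p) := by
  rw [one_div, Real.inv_rpow hz.le, ← Real.rpow_neg hz.le]

lemma rpow_sq (z : ℝ) (hz : 0 ≤ z) (p : ℝ) : (z ^ p)^2 = z^(2*p) := by
  rw [← Real.rpow_natCast (z^p) 2, ← Real.rpow_mul hz]
  norm_num [mul_comm]

lemma hasDerivAt_u {t : ℝ} (ht : 0 < t) :
    HasDerivAt (fun s : ℝ => s ^ ((2:ℝ)/3)) ((2/3) * t ^ (-(1:ℝ)/3)) t := by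
  have h := Real.hasDerivAt_rpow_const (p := (2:ℝ)/3) (Or.inl ht.ne')
  convert h using 2
  norm_num

lemma hasDerivAt_phi {t : ℝ} (ht : 0 < t) :
    HasDerivAt (fun s : ℝ => s ^ (-(1:ℝ)/3)) ((-(1:ℝ)/3) * t ^ (-(4:ℝ)/3)) t := by
  have h := Real.hasDerivAt_rpow_const (p := -(1:ℝ)/3) (Or.inl ht.ne')
  convert h using 2
  norm_num

lemma chord_bound {a b A B : ℝ} (ha : 0 < a) (hab : a < b)
    (h1 : A*a + B = a ^ ((2:ℝ)/3)) (h2 : A*b + B = b ^ ((2:ℝ)/3)) :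
    ∀ x ∈ Set.Icc a b, |x ^ ((2:ℝ)/3) - (A*x + B)| ≤ (2/9) * (b-a)^2 * a ^ (-(4:ℝ)/3) := by
  intro x hx
  have hba : (0:ℝ) < b - a := sub_pos.mpr hab
  have hcontu : ContinuousOn (fun s : ℝ => s ^ ((2:ℝ)/3)) (Icc a b) :=
    (Real.continuous_rpow_const (by norm_num)).continuousOn
  obtain ⟨c, hc, hceq⟩ := exists_hasDerivAt_eq_slope (fun s : ℝ => s ^ ((2:ℝ)/3))
    (fun t => (2/3) * t ^ (-(1:ℝ)/3)) hab hcontu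
    (fun t ht => hasDerivAt_u (ha.trans ht.1))
  have hA : A = (2/3) * c ^ (-(1:ℝ)/3) := by
    rw [← h1, ← h2] at hceq
    field_simp at hceq
    have h3 := mul_right_cancel₀ (sub_ne_zero.mpr hab.ne')
      (show (3*A) * (b-a) = (2 * c ^ (-(1:ℝ)/3)) * (b - a) by linarith)
    linarith
  have hcontp : ContinuousOn (fun s : ℝ => s ^ (-(1:ℝ)/3)) (Icc a b) := fun t ht =>
    (Real.continuousAt_rpow_const t _ (Or.inl (ha.trans_le ht.1).ne')).continuousWithinAt
  obtain ⟨d, hd, hdeq⟩ := exists_hasDerivAt_eq_slope (fun s : ℝ => s ^ (-(1:ℝ)/3))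
    (fun t => (-(1:ℝ)/3) * t ^ (-(4:ℝ)/3)) hab hcontp
    (fun t ht => hasDerivAt_phi (ha.trans ht.1))
  set K : ℝ := (2/3) * (a ^ (-(1:ℝ)/3) - b ^ (-(1:ℝ)/3)) with hK
  have anti : ∀ s t : ℝ, 0 < s → s ≤ t → ∀ q : ℝ, q ≤ 0 → t ^ q ≤ s ^ q :=
    fun s t hs hst q hq => Real.rpow_le_rpow_of_nonpos hs hst hq
  have hFderiv : ∀ t ∈ Icc a b, HasDerivWithinAt
      (fun s : ℝ => s ^ ((2:ℝ)/3) - (A*s + B)) ((2/3) * t ^ (-(1:ℝ)/3) - A) (Icc a b) t := by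
    intro t ht
    exact ((hasDerivAt_u (ha.trans_le ht.1)).sub
      (((hasDerivAt_id t).const_mul A).add_const B |>.congr_deriv (by ring))).hasDerivWithinAt
  have hbound : ∀ t ∈ Icc a b, ‖(2/3) * t ^ (-(1:ℝ)/3) - A‖ ≤ K := by
    intro t ht
    have h₁ := anti a t ha ht.1 _ (by norm_num : -(1:ℝ)/3 ≤ 0)
    have h₂ := anti t b (ha.trans_le ht.1) ht.2 _ (by norm_num : -(1:ℝ)/3 ≤ 0)
    have h₃ := anti a c ha hc.1.le _ (by norm_num : -(1:ℝ)/3 ≤ 0)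
    have h₄ := anti c b (ha.trans hc.1) hc.2.le _ (by norm_num : -(1:ℝ)/3 ≤ 0)
    rw [hA, Real.norm_eq_abs, abs_le]
    constructor <;> [linarith; linarith]
  have key := (convex_Icc a b).norm_image_sub_le_of_norm_hasDerivWithin_le
    hFderiv hbound (left_mem_Icc.mpr hab.le) hx
  have hFa : a ^ ((2:ℝ)/3) - (A*a + B) = 0 := by rw [h1]; ring
  rw [hFa, sub_zero, Real.norm_eq_abs, Real.norm_eq_abs] at key
  have hxa : |x - a| ≤ b - a := by
    rw [abs_le]; constructor <;> [linarith [hx.1]; linarith [hx.2]]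
  have hKb : K ≤ (2/9) * (b - a) * a ^ (-(4:ℝ)/3) := by
    have hd4 := anti a d ha hd.1.le _ (by norm_num : -(4:ℝ)/3 ≤ 0)
    have heq : a ^ (-(1:ℝ)/3) - b ^ (-(1:ℝ)/3) = (1/3) * d ^ (-(4:ℝ)/3) * (b - a) := by
      have := hdeq
      field_simp at this
      linarith [this]
    rw [hK, heq]
    nlinarith [hba]
  have hK0 : 0 ≤ K := by
    have := anti a b ha hab.le _ (by norm_num : -(1:ℝ)/3 ≤ 0)
    rw [hK]; linarith
  calc |x ^ ((2:ℝ)/3) - (A*x + B)| ≤ K * |x - a| := key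
    _ ≤ ((2/9) * (b - a) * a ^ (-(4:ℝ)/3)) * (b - a) := by
        apply mul_le_mul hKb hxa (abs_nonneg _)
        positivity
    _ = (2/9) * (b-a)^2 * a ^ (-(4:ℝ)/3) := by ring

lemma cont_g (A B : ℝ) : Continuous (fun x : ℝ => (x ^ ((2:ℝ)/3) - (A*x+B))^2) := by
  have h := Real.continuous_rpow_const (q := (2:ℝ)/3) (by norm_num)
  fun_prop

lemma interval_piece {y : ℝ → ℝ} {a b A B : ℝ} (hab : a ≤ b)
    (hy : ∀ x ∈ Icc a b, y x = A*x + B) :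
    IntervalIntegrable (fun x => (x ^ ((2:ℝ)/3) - y x)^2) volume a b ∧
    (∫ x in a..b, (x ^ ((2:ℝ)/3) - y x)^2) = ∫ x in a..b, (x ^ ((2:ℝ)/3) - (A*x+B))^2 := by
  have heq : EqOn (fun x => (x ^ ((2:ℝ)/3) - y x)^2)
      (fun x : ℝ => (x ^ ((2:ℝ)/3) - (A*x+B))^2) (Set.uIcc a b) := by
    intro x hx
    rw [Set.uIcc_of_le hab] at hx
    simp [hy x hx]
  refine ⟨((cont_g A B).intervalIntegrable a b).congr ?_, intervalIntegral.integral_congr heq⟩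
  have hsub : Set.uIoc a b ⊆ Set.uIcc a b := Set.uIoc_subset_uIcc
  exact fun x hx => (heq (hsub hx)).symm

lemma integral_sq_le {a b M A B : ℝ} (hab : a ≤ b) (hM0 : 0 ≤ M)
    (hM : ∀ x ∈ Icc a b, |x ^ ((2:ℝ)/3) - (A*x + B)| ≤ M) :
    (∫ x in a..b, (x ^ ((2:ℝ)/3) - (A*x+B))^2) ≤ (b-a) * M^2 := by
  have h := intervalIntegral.integral_mono_on (μ := volume) hab
    ((cont_g A B).intervalIntegrable a b) (_root_.intervalIntegrable_const (c := M^2))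
    (fun x hx => by
      have := hM x hx
      have h2 : |x ^ ((2:ℝ)/3) - (A*x + B)|^2 ≤ M^2 := by
        nlinarith [abs_nonneg (x ^ ((2:ℝ)/3) - (A*x + B))]
      calc (x ^ ((2:ℝ)/3) - (A*x+B))^2 = |x ^ ((2:ℝ)/3) - (A*x + B)|^2 := (sq_abs _).symm
        _ ≤ M^2 := h2)
  simpa [smul_eq_mul] using h

lemma integral_sq_ge {a b m A B : ℝ} (hab : a ≤ b) (hm0 : 0 ≤ m)
    (hm : ∀ x ∈ Icc a b, m ≤ x ^ ((2:ℝ)/3) - (A*x + B)) :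
    (b-a) * m^2 ≤ (∫ x in a..b, (x ^ ((2:ℝ)/3) - (A*x+B))^2) := by
  have h := intervalIntegral.integral_mono_on (μ := volume) hab
    (_root_.intervalIntegrable_const (c := m^2)) ((cont_g A B).intervalIntegrable a b)
    (fun x hx => by nlinarith [hm x hx])
  simpa [smul_eq_mul] using h

lemma sum_inv_sq_le : ∀ m : ℕ, (∑ j ∈ Finset.range m, (1:ℝ)/((j:ℝ)+1)^2) ≤ 2 := by
  have key : ∀ m : ℕ, (∑ j ∈ Finset.range (m+1), (1:ℝ)/((j:ℝ)+1)^2) ≤ 2 - 1/((m:ℝ)+1) := by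
    intro m
    induction m with
    | zero => norm_num
    | succ n ih =>
      rw [Finset.sum_range_succ]
      have h1 : (0:ℝ) < (n:ℝ)+1 := by positivity
      have h2 : (0:ℝ) < (n:ℝ)+2 := by positivity
      have h3 : (1:ℝ)/((n:ℝ)+1+1)^2 ≤ 1/((n:ℝ)+1) - 1/((n:ℝ)+1+1) := by
        rw [show ((n:ℝ)+1+1) = (n:ℝ)+2 by ring]
        rw [div_sub_div _ _ h1.ne' h2.ne', div_le_div_iff₀ (by positivity) (by positivity)]
        nlinarith [Nat.cast_nonneg' (α := ℝ) n]
      push_cast at h3 ih ⊢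
      linarith
  intro m
  match m with
  | 0 => simp
  | (k+1) =>
    have := key k
    have h : (0:ℝ) < 1/((k:ℝ)+1) := by positivity
    linarith

lemma arith_upper {Nr : ℝ} (hNr : 0 < Nr) {i : ℕ} (hi : 1 ≤ i) :
    (((i:ℝ)+1)/Nr - (i:ℝ)/Nr) * ((2/9) * ((((i:ℝ)+1)/Nr - (i:ℝ)/Nr))^2 * ((i:ℝ)/Nr) ^ (-(4:ℝ)/3))^2
      ≤ (4/81)/((i:ℝ))^2 * Nr^(-(7:ℝ)/3) := by
  have hstep : (((i:ℝ)+1)/Nr - (i:ℝ)/Nr) = 1/Nr := by field_simp; ring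
  rw [hstep]
  have hi' : (1:ℝ) ≤ (i:ℝ) := by exact_mod_cast hi
  have hi0 : (0:ℝ) < (i:ℝ) := by linarith
  have ediv : ((i:ℝ)/Nr) ^ (-(4:ℝ)/3) = (i:ℝ)^(-(4:ℝ)/3) * Nr^((4:ℝ)/3) := by
    rw [div_eq_mul_inv, Real.mul_rpow hi0.le (by positivity), Real.inv_rpow hNr.le,
      ← Real.rpow_neg hNr.le]
    norm_num
  have e1 : (1/Nr) = Nr ^ (-(1:ℝ)) := by rw [Real.rpow_neg_one, one_div]
  rw [ediv, e1]
  have expand : Nr^(-(1:ℝ)) * ((2/9) * (Nr^(-(1:ℝ)))^2 * ((i:ℝ)^(-(4:ℝ)/3) * Nr^((4:ℝ)/3)))^2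
     = (4/81) * (Nr^(-(1:ℝ)) * ((Nr^(-(1:ℝ)))^2)^2 * (Nr^((4:ℝ)/3))^2) * ((i:ℝ)^(-(4:ℝ)/3))^2 := by
    ring
  rw [expand, rpow_sq _ hNr.le, rpow_sq _ hNr.le, rpow_sq _ hNr.le, rpow_sq _ hi0.le,
    ← Real.rpow_add hNr, ← Real.rpow_add hNr,
    show (-(1:ℝ) + 2*(2*(-(1:ℝ))) + 2*((4:ℝ)/3)) = -(7:ℝ)/3 by norm_num,
    show (2*(-(4:ℝ)/3)) = -(8:ℝ)/3 by norm_num]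
  have h8 : (i:ℝ)^(-(8:ℝ)/3) ≤ 1/(i:ℝ)^2 := by
    have h := Real.rpow_le_rpow_of_exponent_le hi' (show -(8:ℝ)/3 ≤ -(2:ℝ) by norm_num)
    have h2 : (i:ℝ)^(-(2:ℝ)) = 1/(i:ℝ)^2 := by
      rw [Real.rpow_neg hi0.le, one_div]
      congr 1
      rw [← Real.rpow_natCast (i:ℝ) 2]
      norm_num
    rwa [h2] at h
  calc (4:ℝ)/81 * Nr^(-(7:ℝ)/3) * (i:ℝ)^(-(8:ℝ)/3)
      ≤ (4:ℝ)/81 * Nr^(-(7:ℝ)/3) * (1/(i:ℝ)^2) := by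
        apply mul_le_mul_of_nonneg_left h8
        positivity
    _ = (4/81)/((i:ℝ))^2 * Nr^(-(7:ℝ)/3) := by ring

lemma zero_piece {Nr A : ℝ} (hNr : 0 < Nr) (hA : A * (1/Nr) = (1/Nr) ^ ((2:ℝ)/3)) :
    (∫ x in (0:ℝ)..(1/Nr), (x ^ ((2:ℝ)/3) - (A*x+0))^2) ≤ Nr^(-(7:ℝ)/3) ∧
    (1/4096) * Nr^(-(7:ℝ)/3) ≤ ∫ x in (0:ℝ)..(1/Nr), (x ^ ((2:ℝ)/3) - (A*x+0))^2 := by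
  have hNe : (0:ℝ) < 1/Nr := by positivity
  have hA' : A = Nr ^ ((1:ℝ)/3) := by
    have h : A = (1/Nr)^((2:ℝ)/3) * Nr := by
      rw [← hA]; field_simp
    rw [h, one_div_rpow_eq hNr]
    nth_rewrite 2 [show Nr = Nr ^ (1:ℝ) from (Real.rpow_one Nr).symm]
    rw [← Real.rpow_add hNr]
    norm_num
  have hAnn : 0 ≤ A := by rw [hA']; positivity
  have hQ : (1/Nr)^((2:ℝ)/3) = Nr^(-(2:ℝ)/3) := by
    rw [one_div_rpow_eq hNr]
    norm_num
  constructor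
  · have hup := integral_sq_le (a := 0) (b := 1/Nr) (A := A) (B := 0)
      (M := Nr^(-(2:ℝ)/3)) hNe.le (by positivity) ?_
    · refine hup.trans_eq ?_
      rw [sub_zero, one_div, ← Real.rpow_neg_one, rpow_sq _ hNr.le, ← Real.rpow_add hNr]
      norm_num
    · intro x hx
      have hx23 : 0 ≤ x ^ ((2:ℝ)/3) := Real.rpow_nonneg hx.1 _
      have hx23' : x ^ ((2:ℝ)/3) ≤ (1/Nr) ^ ((2:ℝ)/3) :=
        Real.rpow_le_rpow hx.1 hx.2 (by norm_num)
      have h5 : A * x ≤ (1/Nr)^((2:ℝ)/3) := by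
        calc A*x ≤ A*(1/Nr) := mul_le_mul_of_nonneg_left hx.2 hAnn
          _ = _ := hA
      have h6 : 0 ≤ A * x := mul_nonneg hAnn hx.1
      rw [hQ] at hx23' h5
      rw [abs_le]
      constructor <;> [linarith; linarith]
  · have hm1 : (0:ℝ) < 1/(8*Nr) := by positivity
    have hab' : 1/(8*Nr) ≤ 3/(16*Nr) := by
      rw [div_le_div_iff₀ (by positivity) (by positivity)]
      nlinarith
    have hbd : 3/(16*Nr) ≤ 1/Nr := by
      rw [div_le_div_iff₀ (by positivity) hNr]
      nlinarith
    have key18 : ((1:ℝ)/8) ^ ((2:ℝ)/3) = 1/4 := by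
      rw [show (1/8:ℝ) = (1/2:ℝ)^(3:ℝ) by
          rw [show (3:ℝ) = ((3:ℕ):ℝ) by norm_num, Real.rpow_natCast]; norm_num,
        ← Real.rpow_mul (by norm_num : (0:ℝ) ≤ 1/2),
        show (3:ℝ)*((2:ℝ)/3) = ((2:ℕ):ℝ) by norm_num, Real.rpow_natCast]
      norm_num
    have key1 : (1/(8*Nr))^((2:ℝ)/3) = (1/4) * Nr^(-(2:ℝ)/3) := by
      rw [show (1/(8*Nr):ℝ) = (1/8) * (1/Nr) by ring,
        Real.mul_rpow (by norm_num) (by positivity), key18, hQ]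
    have key2 : A * (3/(16*Nr)) = (3/16) * Nr^(-(2:ℝ)/3) := by
      rw [hA']
      have hsplit : Nr^((1:ℝ)/3) * (3/(16*Nr)) = (3/16) * (Nr^((1:ℝ)/3) * Nr^(-(1:ℝ))) := by
        rw [Real.rpow_neg_one]
        field_simp
      rw [hsplit, ← Real.rpow_add hNr]
      norm_num
    have hge := integral_sq_ge (a := 1/(8*Nr)) (b := 3/(16*Nr)) (A := A) (B := 0)
      (m := (1/16) * Nr^(-(2:ℝ)/3)) hab' (by positivity) ?_
    · have hmono := intervalIntegral.integral_mono_interval (μ := volume)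
        (f := fun x => (x ^ ((2:ℝ)/3) - (A*x+0))^2)
        (a := 1/(8*Nr)) (b := 3/(16*Nr)) (c := 0) (d := 1/Nr)
        hm1.le hab' hbd
        (Filter.Eventually.of_forall (fun x => sq_nonneg _))
        ((cont_g A 0).intervalIntegrable 0 (1/Nr))
      refine le_trans ?_ (hge.trans hmono)
      have : (3/(16*Nr) - 1/(8*Nr)) = 1/(16*Nr) := by
        field_simp
        ring
      rw [this, mul_pow, rpow_sq _ hNr.le,
        show (1/(16*Nr):ℝ) = (1/16) * (Nr^(-(1:ℝ))) by rw [Real.rpow_neg_one]; ring,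
        show ((1:ℝ)/16 * Nr^(-(1:ℝ))) * (((1:ℝ)/16)^2 * Nr^(2*(-(2:ℝ)/3)))
          = (1/4096) * (Nr^(-(1:ℝ)) * Nr^(2*(-(2:ℝ)/3))) by ring,
        ← Real.rpow_add hNr]
      norm_num
    · intro x hx
      have hx1 : (1/(8*Nr))^((2:ℝ)/3) ≤ x ^ ((2:ℝ)/3) :=
        Real.rpow_le_rpow hm1.le hx.1 (by norm_num)
      have hx2 : A * x ≤ A * (3/(16*Nr)) := mul_le_mul_of_nonneg_left hx.2 hAnn
      rw [key1] at hx1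
      rw [key2] at hx2
      linarith

theorem stmt_8 :
    ∃ c C : ℝ, 0 < c ∧ 0 < C ∧
      ∀ N : ℕ, 1 ≤ N → ∀ y : ℝ → ℝ,
        (∀ i : ℕ, i ≤ N → y ((i : ℝ)/N) = ((i : ℝ)/N) ^ ((2:ℝ)/3)) →
        (∀ i : ℕ, i < N → ∃ A B : ℝ,
          ∀ x ∈ Set.Icc ((i : ℝ)/N) (((i : ℝ)+1)/N), y x = A * x + B) →
        c * (N : ℝ) ^ (-(7:ℝ)/3) ≤ ∫ x in (0:ℝ)..1, (x ^ ((2:ℝ)/3) - y x)^2 ∧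
        (∫ x in (0:ℝ)..1, (x ^ ((2:ℝ)/3) - y x)^2) ≤ C * (N : ℝ) ^ (-(7:ℝ)/3) := by
  refine ⟨1/4096, 2, by norm_num, by norm_num, ?_⟩
  intro N hN y hknot hlin
  have hNr : (0:ℝ) < (N:ℝ) := by exact_mod_cast hN
  choose A B hAB using hlin
  have hab : ∀ i : ℕ, (i:ℝ)/(N:ℝ) ≤ ((i:ℝ)+1)/(N:ℝ) := by
    intro i
    gcongr
    linarith
  have h1 : ∀ i (hi : i < N), A i hi * ((i:ℝ)/(N:ℝ)) + B i hi = ((i:ℝ)/(N:ℝ)) ^ ((2:ℝ)/3) := by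
    intro i hi
    rw [← hAB i hi _ (left_mem_Icc.mpr (hab i))]
    exact hknot i hi.le
  have h2 : ∀ i (hi : i < N),
      A i hi * (((i:ℝ)+1)/(N:ℝ)) + B i hi = (((i:ℝ)+1)/(N:ℝ)) ^ ((2:ℝ)/3) := by
    intro i hi
    rw [← hAB i hi _ (right_mem_Icc.mpr (hab i))]
    have := hknot (i+1) (by omega)
    push_cast at this
    exact this
  have hpiece := fun (i:ℕ) (hi : i < N) => interval_piece (hab i) (hAB i hi)
  have hsum : (∫ x in (0:ℝ)..1, (x ^ ((2:ℝ)/3) - y x)^2)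
      = ∑ k ∈ Finset.range N,
          ∫ x in ((k:ℝ)/(N:ℝ))..(((k:ℝ)+1)/(N:ℝ)), (x ^ ((2:ℝ)/3) - y x)^2 := by
    have h := intervalIntegral.sum_integral_adjacent_intervals (μ := volume)
      (f := fun x => (x ^ ((2:ℝ)/3) - y x)^2) (a := fun k : ℕ => (k:ℝ)/(N:ℝ)) (n := N)
      (fun k hk => by
        have hcast : ((k+1:ℕ):ℝ)/(N:ℝ) = ((k:ℝ)+1)/(N:ℝ) := by push_cast; ring
        show IntervalIntegrable _ volume ((k:ℝ)/(N:ℝ)) (((k+1:ℕ):ℝ)/(N:ℝ))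
        rw [hcast]
        exact (hpiece k hk).1)
    rw [show (((0:ℕ):ℝ))/(N:ℝ) = 0 by norm_num,
      show (((N:ℕ)):ℝ)/(N:ℝ) = 1 from div_self hNr.ne'] at h
    rw [← h]
    refine Finset.sum_congr rfl (fun k _ => ?_)
    have hcast : ((k+1:ℕ):ℝ)/(N:ℝ) = ((k:ℝ)+1)/(N:ℝ) := by push_cast; ring
    rw [hcast]
  have hB0 : ∀ (h : 0 < N), B 0 h = 0 := by
    intro h
    have e := h1 0 h
    simpa [Real.zero_rpow (show ((2:ℝ)/3) ≠ 0 by norm_num)] using e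
  have hA0 : ∀ (h : 0 < N), A 0 h * (1/(N:ℝ)) = (1/(N:ℝ))^((2:ℝ)/3) := by
    intro h
    have e := h2 0 h
    rw [hB0 h] at e
    simpa using e
  have upper : ∀ (i:ℕ) (hi : i < N),
      (∫ x in ((i:ℝ)/(N:ℝ))..(((i:ℝ)+1)/(N:ℝ)), (x ^ ((2:ℝ)/3) - y x)^2)
        ≤ (if i = 0 then (1:ℝ) else (4/81)/((i:ℝ))^2) * (N:ℝ)^(-(7:ℝ)/3) := by
    intro i hi
    rw [(hpiece i hi).2]
    rcases Nat.eq_zero_or_pos i with rfl | hi1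
    · rw [if_pos rfl, one_mul, hB0 hi, Nat.cast_zero, zero_div, zero_add]
      exact (zero_piece hNr (hA0 hi)).1
    · rw [if_neg (by omega)]
      have hia : (0:ℝ) < (i:ℝ)/(N:ℝ) := div_pos (by exact_mod_cast hi1) hNr
      have hilt : (i:ℝ)/(N:ℝ) < ((i:ℝ)+1)/(N:ℝ) := by
        rw [div_lt_div_iff₀ hNr hNr]
        nlinarith
      have hcb := chord_bound hia hilt (h1 i hi) (h2 i hi)
      have hle := integral_sq_le (hab i) (by positivity) hcb
      exact hle.trans (arith_upper hNr hi1)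
  constructor
  · have e0 : (1/4096) * (N:ℝ)^(-(7:ℝ)/3)
        ≤ ∫ x in (((0:ℕ):ℝ)/(N:ℝ))..((((0:ℕ):ℝ)+1)/(N:ℝ)), (x ^ ((2:ℝ)/3) - y x)^2 := by
      rw [(hpiece 0 hN).2, hB0 hN, Nat.cast_zero, zero_div, zero_add]
      exact (zero_piece hNr (hA0 hN)).2
    calc (1/4096) * (N:ℝ)^(-(7:ℝ)/3)
        ≤ ∫ x in (((0:ℕ):ℝ)/(N:ℝ))..((((0:ℕ):ℝ)+1)/(N:ℝ)), (x ^ ((2:ℝ)/3) - y x)^2 := e0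
      _ ≤ ∑ k ∈ Finset.range N,
            ∫ x in ((k:ℝ)/(N:ℝ))..(((k:ℝ)+1)/(N:ℝ)), (x ^ ((2:ℝ)/3) - y x)^2 :=
          Finset.single_le_sum
            (f := fun k : ℕ =>
              ∫ x in ((k:ℝ)/(N:ℝ))..(((k:ℝ)+1)/(N:ℝ)), (x ^ ((2:ℝ)/3) - y x)^2)
            (fun i _ => intervalIntegral.integral_nonneg (hab i) (fun u _ => sq_nonneg _))
            (Finset.mem_range.mpr hN)
      _ = _ := hsum.symm
  · rw [hsum]
    obtain ⟨M, rfl⟩ : ∃ M, N = M + 1 := ⟨N-1, by omega⟩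
    have hc0 : (0:ℝ) ≤ ((M+1:ℕ):ℝ)^(-(7:ℝ)/3) := (Real.rpow_pos_of_pos hNr _).le
    calc ∑ k ∈ Finset.range (M+1),
            ∫ x in ((k:ℝ)/((M+1:ℕ):ℝ))..(((k:ℝ)+1)/((M+1:ℕ):ℝ)), (x ^ ((2:ℝ)/3) - y x)^2
        ≤ ∑ k ∈ Finset.range (M+1),
            (if k = 0 then (1:ℝ) else (4/81)/((k:ℝ))^2) * ((M+1:ℕ):ℝ)^(-(7:ℝ)/3) :=
          Finset.sum_le_sum (fun i hi => upper i (Finset.mem_range.mp hi))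
      _ = (∑ j ∈ Finset.range M,
            (if j+1 = 0 then (1:ℝ) else (4/81)/(((j+1:ℕ)):ℝ)^2) * ((M+1:ℕ):ℝ)^(-(7:ℝ)/3))
          + (if (0:ℕ) = 0 then (1:ℝ) else (4/81)/(((0:ℕ)):ℝ)^2) * ((M+1:ℕ):ℝ)^(-(7:ℝ)/3) :=
          Finset.sum_range_succ' _ M
      _ ≤ 2 * ((M+1:ℕ):ℝ)^(-(7:ℝ)/3) := by
          rw [if_pos rfl, one_mul]
          have hterm : ∀ j ∈ Finset.range M,
              (if j+1 = 0 then (1:ℝ) else (4/81)/(((j+1:ℕ)):ℝ)^2) * ((M+1:ℕ):ℝ)^(-(7:ℝ)/3)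
              = (4/81) * ((M+1:ℕ):ℝ)^(-(7:ℝ)/3) * ((1:ℝ)/((j:ℝ)+1)^2) := by
            intro j _
            rw [if_neg (Nat.succ_ne_zero j)]
            push_cast
            ring
          rw [Finset.sum_congr rfl hterm, ← Finset.mul_sum]
          have hs := sum_inv_sq_le M
          have : (4:ℝ)/81 * ((M+1:ℕ):ℝ)^(-(7:ℝ)/3) * (∑ j ∈ Finset.range M, (1:ℝ)/((j:ℝ)+1)^2)
              ≤ (4:ℝ)/81 * ((M+1:ℕ):ℝ)^(-(7:ℝ)/3) * 2 := by
            apply mul_le_mul_of_nonneg_left hs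
            positivity
          linarith
end

section
/- The L∞ error of the uniform-knot piecewise linear interpolant of u(x)=x^{2/3} on [0,1] satisfies c·N^{-2/3} ≤ max_{x∈[0,1]} |u(x)-y(x)| ≤ C·N^{-2/3} for positive constants c, C independent of N. -/
open scoped NNReal

lemma rpow_subadd {a b : ℝ} (ha : 0 ≤ a) (hb : 0 ≤ b) :
    (a + b) ^ ((2:ℝ)/3) ≤ a ^ ((2:ℝ)/3) + b ^ ((2:ℝ)/3) := by
  have h := NNReal.rpow_add_le_add_rpow a.toNNReal b.toNNReal (by norm_num : (0:ℝ) ≤ 2/3)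
    (by norm_num : (2:ℝ)/3 ≤ 1)
  have h3 := NNReal.coe_le_coe.mpr h
  simpa [NNReal.coe_rpow, NNReal.coe_add, Real.coe_toNNReal a ha, Real.coe_toNNReal b hb]
    using h3

set_option maxHeartbeats 2000000 in
theorem stmt_9 :
    ∃ c C : ℝ, 0 < c ∧ 0 < C ∧
      ∀ N : ℕ, 1 ≤ N → ∀ y : ℝ → ℝ,
        (∀ i : ℕ, i ≤ N → y ((i : ℝ)/N) = ((i : ℝ)/N) ^ ((2:ℝ)/3)) →
        (∀ i : ℕ, i < N → ∃ A B : ℝ,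
          ∀ x ∈ Set.Icc ((i : ℝ)/N) (((i : ℝ)+1)/N), y x = A * x + B) →
        c * (N : ℝ) ^ (-(2:ℝ)/3) ≤
            (⨆ x : Set.Icc (0:ℝ) 1, |(x : ℝ) ^ ((2:ℝ)/3) - y x|) ∧
        (⨆ x : Set.Icc (0:ℝ) 1, |(x : ℝ) ^ ((2:ℝ)/3) - y x|) ≤
            C * (N : ℝ) ^ (-(2:ℝ)/3) := by
  refine ⟨4/27, 1, by norm_num, by norm_num, ?_⟩
  intro N hN y hknot hlin
  have hN0 : (0:ℝ) < N := by exact_mod_cast Nat.pos_of_ne_zero (by omega)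
  obtain ⟨n, hn⟩ : ∃ n : ℝ, (N:ℝ) = n := ⟨_, rfl⟩
  rw [hn] at hknot hlin hN0 ⊢
  have h1n : (1:ℝ) ≤ n := by rw [← hn]; exact_mod_cast hN
  have hpow : (1/n) ^ ((2:ℝ)/3) = n ^ (-(2:ℝ)/3) := by
    rw [one_div, ← Real.rpow_neg_one n, ← Real.rpow_mul hN0.le]
    norm_num
  -- key pointwise bound
  have key : ∀ x ∈ Set.Icc (0:ℝ) 1, |x ^ ((2:ℝ)/3) - y x| ≤ n ^ (-(2:ℝ)/3) := by
    intro x hx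
    obtain ⟨hx0, hx1⟩ := hx
    -- choose the interval index
    set i : ℕ := min ⌊x * n⌋₊ (N - 1) with hi
    have hiN : i < N := by
      have : N - 1 < N := by omega
      exact lt_of_le_of_lt (min_le_right _ _) this
    have hlow : (i:ℝ)/n ≤ x := by
      rw [div_le_iff₀ hN0]
      calc (i:ℝ) ≤ (⌊x*n⌋₊ : ℝ) := by exact_mod_cast min_le_left _ _
        _ ≤ x * n := Nat.floor_le (by positivity)
    have hhigh : x ≤ ((i:ℝ)+1)/n := by
      rw [le_div_iff₀ hN0]
      rcases lt_or_ge (x*n) n with h | h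
      · have hfl : ⌊x*n⌋₊ ≤ N - 1 := by
          have : ⌊x*n⌋₊ < N := by
            rw [Nat.floor_lt (by positivity), hn]; exact h
          omega
        have : i = ⌊x*n⌋₊ := min_eq_left (by omega)
        rw [this]
        exact le_of_lt (Nat.lt_floor_add_one _)
      · have hx1' : x = 1 := le_antisymm hx1 (by nlinarith)
        have : i = N - 1 := by
          apply min_eq_right
          rw [hx1', one_mul] at h ⊢
          have : N ≤ ⌊n⌋₊ := by
            rw [Nat.le_floor_iff (by positivity), hn]
          omega
        rw [this, hx1', one_mul]
        have : ((N - 1 : ℕ):ℝ) = n - 1 := by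
          push_cast [Nat.cast_sub hN]; rw [hn]
        rw [this]; linarith
    obtain ⟨A, B, hAB⟩ := hlin i hiN
    have ya : A * ((i:ℝ)/n) + B = ((i:ℝ)/n) ^ ((2:ℝ)/3) := by
      rw [← hAB _ ⟨le_refl _, by rw [div_le_div_iff₀ hN0 hN0]; nlinarith⟩]
      exact hknot i (le_of_lt hiN)
    have yb : A * (((i:ℝ)+1)/n) + B = (((i:ℝ)+1)/n) ^ ((2:ℝ)/3) := by
      rw [← hAB _ ⟨by rw [div_le_div_iff₀ hN0 hN0]; nlinarith, le_refl _⟩]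
      have := hknot (i+1) hiN
      push_cast at this
      exact this
    have hyx : y x = A * x + B := hAB x ⟨hlow, hhigh⟩
    set ua := ((i:ℝ)/n) ^ ((2:ℝ)/3) with hua
    set ub := (((i:ℝ)+1)/n) ^ ((2:ℝ)/3) with hub
    have huab : ua ≤ ub := by
      apply Real.rpow_le_rpow (by positivity) _ (by norm_num)
      gcongr
      linarith
    have h1 : A * (1/n) = ub - ua := by
      have e : A*(((i:ℝ)+1)/n) - A*((i:ℝ)/n) = A*(1/n) := by field_simp; ring
      linarith [ya, yb, e]
    have hA : 0 ≤ A := by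
      have h2 : 0 ≤ A * (1/n) := by rw [h1]; linarith
      have h3 : A = (A * (1/n)) * n := by field_simp
      rw [h3]; exact mul_nonneg h2 hN0.le
    have hy1 : ua ≤ y x := by
      rw [hyx]; nlinarith [mul_le_mul_of_nonneg_left hlow hA, ya]
    have hy2 : y x ≤ ub := by
      rw [hyx]; nlinarith [mul_le_mul_of_nonneg_left hhigh hA, yb]
    have hu1 : ua ≤ x ^ ((2:ℝ)/3) :=
      Real.rpow_le_rpow (by positivity) hlow (by norm_num)
    have hu2 : x ^ ((2:ℝ)/3) ≤ ub :=
      Real.rpow_le_rpow hx0 hhigh (by norm_num)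
    have hdiff : ub - ua ≤ n ^ (-(2:ℝ)/3) := by
      have : ((i:ℝ)+1)/n = (i:ℝ)/n + 1/n := by ring
      rw [hub, this]
      have := rpow_subadd (a := (i:ℝ)/n) (b := 1/n) (by positivity) (by positivity)
      rw [hpow] at this
      linarith [this]
    rw [abs_le]
    constructor <;> nlinarith
  have hne : Nonempty (Set.Icc (0:ℝ) 1) := ⟨⟨0, by norm_num, by norm_num⟩⟩
  have hbdd : BddAbove (Set.range fun x : Set.Icc (0:ℝ) 1 => |(x:ℝ) ^ ((2:ℝ)/3) - y x|) := by
    refine ⟨n ^ (-(2:ℝ)/3), ?_⟩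
    rintro v ⟨⟨x, hx⟩, rfl⟩
    exact key x hx
  constructor
  · -- lower bound
    obtain ⟨x0, hx0def⟩ : ∃ x0 : ℝ, x0 = 8/(27*n) := ⟨_, rfl⟩
    have hq : (8:ℝ)/(27*n) ≤ 1/n := by
      have ht : (0:ℝ) < 1/n := by positivity
      have : (8:ℝ)/(27*n) = (8/27)*(1/n) := by ring
      rw [this]; linarith
    have hx0mem : x0 ∈ Set.Icc (0:ℝ) 1 := by
      constructor
      · rw [hx0def]; positivity
      · rw [hx0def, div_le_one (by positivity)]
        nlinarith [hN0, h1n]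
    obtain ⟨A, B, hAB⟩ := hlin 0 (by omega)
    have h0 : y 0 = 0 := by
      have := hknot 0 (by omega)
      simpa [Real.zero_rpow (by norm_num : (2:ℝ)/3 ≠ 0)] using this
    have hB : B = 0 := by
      have := hAB 0 ⟨by simp, by positivity⟩
      simp at this
      rw [h0] at this; linarith
    have hA : A * (1/n) = (1/n) ^ ((2:ℝ)/3) := by
      have h1 := hAB (1/n)
        ⟨by rw [Nat.cast_zero, zero_div]; positivity, by rw [Nat.cast_zero, zero_add]⟩
      have h2 := hknot 1 hN
      push_cast at h2
      rw [h2] at h1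
      rw [hB, add_zero] at h1
      exact h1.symm
    have hx0int : x0 ∈ Set.Icc ((0:ℝ)/n) ((0+1)/n) := by
      constructor
      · rw [zero_div, hx0def]; positivity
      · rw [hx0def, zero_add]; exact hq
    have hyx0 : y x0 = A * x0 := by
      have := hAB x0 (by push_cast at hx0int ⊢; exact hx0int)
      rw [this, hB, add_zero]
    have hAval : A = n * (1/n) ^ ((2:ℝ)/3) := by
      have h3 : A = (A * (1/n)) * n := by field_simp
      rw [h3, hA]; ring
    have hx0pow : x0 ^ ((2:ℝ)/3) = (4/9) * (1/n) ^ ((2:ℝ)/3) := by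
      have h8 : x0 = (8/27) * (1/n) := by rw [hx0def]; ring
      rw [h8, Real.mul_rpow (by norm_num) (by positivity)]
      congr 1
      have : (8:ℝ)/27 = (2/3) ^ (3:ℕ) := by norm_num
      rw [this, ← Real.rpow_natCast ((2:ℝ)/3) 3, ← Real.rpow_mul (by norm_num),
        show ((3:ℕ):ℝ) * (2/3) = ((2:ℕ):ℝ) by norm_num, Real.rpow_natCast]
      norm_num
    have hval : x0 ^ ((2:ℝ)/3) - y x0 = (4/27) * n ^ (-(2:ℝ)/3) := by
      have hne' : n ≠ 0 := ne_of_gt hN0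
      have hred : n * (8/(27*n)) = 8/27 := by field_simp
      rw [hyx0, hAval, hx0pow, ← hpow, hx0def,
        show n * (1/n)^((2:ℝ)/3) * (8/(27*n)) = (n*(8/(27*n))) * (1/n)^((2:ℝ)/3) from by ring,
        hred]
      ring
    calc (4/27) * n ^ (-(2:ℝ)/3) = |x0 ^ ((2:ℝ)/3) - y x0| := by
          rw [hval, abs_of_nonneg (by positivity)]
      _ ≤ _ := le_ciSup hbdd ⟨x0, hx0mem⟩
  · rw [one_mul]
    exact ciSup_le fun ⟨x, hx⟩ => key x hx
end

section
/- Let u be C² on [0,1] with |u''| bounded by M, and let y be the piecewise linear interpolant on equidistributed knots satisfying (k_{i+1}-k_i)·max_{[k_i,k_{i+1}]}|u''|^{2/5} ≤ σ for all i. Then ∫₀¹ (y-u)² dx ≤ (N/120)·σ⁵. -/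
open Set intervalIntegral MeasureTheory

lemma interp_err_s15 {a b C : ℝ} (hab : a < b) {f : ℝ → ℝ}
    (hfc : ContinuousOn f (Set.Icc a b))
    (h1 : ∀ x ∈ Set.Ioo a b, DifferentiableAt ℝ f x)
    (h2 : ∀ x ∈ Set.Ioo a b, DifferentiableAt ℝ (deriv f) x)
    (hC : ∀ x ∈ Set.Ioo a b, |deriv (deriv f) x| ≤ C)
    (ha : f a = 0) (hb : f b = 0) :
    ∀ x ∈ Set.Icc a b, |f x| ≤ C / 2 * ((x - a) * (b - x)) := by
  intro x hx
  rcases eq_or_lt_of_le hx.1 with h | hax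
  · simp [← h, ha]
  rcases eq_or_lt_of_le hx.2 with h | hxb
  · simp [h, hb]
  have hxI : x ∈ Set.Ioo a b := ⟨hax, hxb⟩
  set w : ℝ → ℝ := fun t => (t - a) * (b - t) with hw_def
  have hwx : 0 < w x := mul_pos (by linarith) (by linarith)
  set r : ℝ := f x / w x with hr_def
  have hfxr : f x = r * w x := by rw [hr_def, div_mul_cancel₀ _ hwx.ne']
  set g : ℝ → ℝ := fun t => f t - r * w t with hg_def
  have hwc : Continuous w := by fun_prop
  have hwd : ∀ t : ℝ, HasDerivAt w (a + b - 2 * t) t := by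
    intro t
    have d1 : HasDerivAt (fun t : ℝ => t - a) 1 t := (hasDerivAt_id t).sub_const a
    have d2 : HasDerivAt (fun t : ℝ => b - t) (-1) t := by
      simpa using (hasDerivAt_const t b).fun_sub (hasDerivAt_id' t)
    have := d1.fun_mul d2
    exact this.congr_deriv (by ring)
  have hgc : ContinuousOn g (Set.Icc a b) := hfc.sub ((hwc.continuousOn).const_smul r)
  have hga : g a = 0 := by simp [hg_def, hw_def, ha]
  have hgb : g b = 0 := by simp [hg_def, hw_def, hb]
  have hgx : g x = 0 := by simp [hg_def, hfxr]
  obtain ⟨c1, hc1, hgc1⟩ := exists_deriv_eq_zero hax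
    (hgc.mono (Icc_subset_Icc le_rfl hx.2)) (by rw [hga, hgx])
  obtain ⟨c2, hc2, hgc2⟩ := exists_deriv_eq_zero hxb
    (hgc.mono (Icc_subset_Icc hx.1 le_rfl)) (by rw [hgx, hgb])
  have hc1I : c1 ∈ Set.Ioo a b := ⟨hc1.1, hc1.2.trans hxb⟩
  have hc2I : c2 ∈ Set.Ioo a b := ⟨hax.trans hc2.1, hc2.2⟩
  -- formula for deriv g on Ioo a b
  have hderg : ∀ t ∈ Set.Ioo a b, deriv g t = deriv f t - r * (a + b - 2 * t) := by
    intro t ht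
    have : HasDerivAt g (deriv f t - r * (a + b - 2 * t)) t :=
      ((h1 t ht).hasDerivAt).sub ((hwd t).const_mul r)
    exact this.deriv
  set φ : ℝ → ℝ := fun t => deriv f t - r * (a + b - 2 * t) with hφ_def
  have hφc : ContinuousOn φ (Set.Ioo a b) := by
    apply ContinuousOn.sub
    · exact fun t ht => ((h2 t ht).continuousAt).continuousWithinAt
    · fun_prop
  have hc1c2 : c1 < c2 := hc1.2.trans hc2.1
  have hsub : Set.Icc c1 c2 ⊆ Set.Ioo a b := fun t ht => ⟨hc1I.1.trans_le ht.1, ht.2.trans_lt hc2I.2⟩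
  obtain ⟨ξ, hξ, hξ0⟩ := exists_deriv_eq_zero hc1c2
    ((hφc.mono hsub).congr (fun t ht => hderg t (hsub ht)))
    (by rw [hgc1, hgc2])
  have hξI : ξ ∈ Set.Ioo a b := hsub ⟨hξ.1.le, hξ.2.le⟩
  -- deriv (deriv g) ξ = deriv (deriv f) ξ + 2 r
  have hev : deriv g =ᶠ[nhds ξ] φ := by
    filter_upwards [isOpen_Ioo.mem_nhds hξI] with t ht using hderg t ht
  have hφder : HasDerivAt φ (deriv (deriv f) ξ + 2 * r) ξ := by
    have d1 : HasDerivAt (fun t : ℝ => a + b - 2 * t) (-2) ξ := by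
      have := ((hasDerivAt_id ξ).const_mul 2)
      have := (hasDerivAt_const ξ (a + b)).fun_sub this
      exact this.congr_deriv (by ring)
    have := ((h2 ξ hξI).hasDerivAt).fun_sub (d1.const_mul r)
    exact this.congr_deriv (by ring)
  have hkey : deriv (deriv f) ξ + 2 * r = 0 := by
    rw [← hφder.deriv, ← hev.deriv_eq, hξ0]
  have hr : |r| ≤ C / 2 := by
    have h := hC ξ hξI
    have : r = -(deriv (deriv f) ξ) / 2 := by linarith
    rw [this, abs_div, abs_neg]
    simp only [abs_two]
    linarith [abs_nonneg (deriv (deriv f) ξ)]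
  calc |f x| = |r| * w x := by rw [hfxr, abs_mul, abs_of_pos hwx]
  _ ≤ C / 2 * w x := by nlinarith [hwx]

lemma int_poly (a b : ℝ) : ∫ x in a..b, (x - a)^2 * (b - x)^2 = (b - a)^5 / 30 := by
  have key : ∀ x : ℝ, HasDerivAt (fun x : ℝ => (x-a)^5/5 - (b-a)/2*(x-a)^4 + (b-a)^2/3*(x-a)^3)
      ((x - a)^2 * (b - x)^2) x := by
    intro x
    have hbase : HasDerivAt (fun x : ℝ => x - a) 1 x := (hasDerivAt_id x).sub_const a
    have p5 := hbase.fun_pow 5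
    have p4 := hbase.fun_pow 4
    have p3 := hbase.fun_pow 3
    have := ((p5.div_const 5).fun_sub (p4.const_mul ((b-a)/2))).fun_add (p3.const_mul ((b-a)^2/3))
    exact this.congr_deriv (by push_cast; ring)
  rw [intervalIntegral.integral_eq_sub_of_hasDerivAt (fun x _ => key x)
    (Continuous.intervalIntegrable (by fun_prop) _ _)]
  ring

theorem stmt_15 (N : ℕ) (hN : 1 ≤ N) (k : Fin (N+1) → ℝ)
    (hk : StrictMono k) (hk0 : k 0 = 0) (hkN : k (Fin.last N) = 1)
    (u : ℝ → ℝ) (hu : ContDiffOn ℝ 2 u (Set.Icc 0 1))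
    (M : ℝ) (hM : ∀ s ∈ Set.Icc (0:ℝ) 1, |deriv (deriv u) s| ≤ M)
    (y : ℝ → ℝ)
    (hyk : ∀ i : Fin (N+1), y (k i) = u (k i))
    (haff : ∀ i : Fin N, ∃ A B : ℝ,
      ∀ x ∈ Set.Icc (k i.castSucc) (k i.succ), y x = A * x + B)
    (σ : ℝ) (hσ : 0 < σ)
    (hequi : ∀ i : Fin N, (k i.succ - k i.castSucc) *
      (⨆ ξ : Set.Icc (k i.castSucc) (k i.succ), |deriv (deriv u) ξ|) ^ ((2:ℝ)/5) ≤ σ) :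
    ∫ x in (0:ℝ)..1, (y x - u x)^2 ≤ ((N : ℝ)/120) * σ^5 := by
  have hmem : ∀ j : Fin (N+1), k j ∈ Set.Icc (0:ℝ) 1 := by
    intro j
    constructor
    · rw [← hk0]; exact hk.monotone (Fin.zero_le j)
    · rw [← hkN]; exact hk.monotone (Fin.le_last j)
  have hu1 : ∀ x ∈ Set.Ioo (0:ℝ) 1, DifferentiableAt ℝ u x := by
    intro x hx
    exact (hu.contDiffAt (Icc_mem_nhds hx.1 hx.2)).differentiableAt (by norm_num)
  have hu2 : ∀ x ∈ Set.Ioo (0:ℝ) 1, DifferentiableAt ℝ (deriv u) x := by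
    intro x hx
    have hcd : ContDiffAt ℝ 2 u x := hu.contDiffAt (Icc_mem_nhds hx.1 hx.2)
    obtain ⟨s, hs, hcds⟩ := hcd.contDiffOn le_rfl (by simp)
    have hxo : x ∈ interior s := mem_interior_iff_mem_nhds.2 hs
    have hd1 : ContDiffOn ℝ 1 (deriv u) (interior s) :=
      (hcds.mono interior_subset).deriv_of_isOpen isOpen_interior (by norm_num)
    exact (hd1.differentiableOn one_ne_zero).differentiableAt (isOpen_interior.mem_nhds hxo)
  -- per cell facts
  have cell : ∀ i : Fin N,
      IntervalIntegrable (fun x => (y x - u x)^2) volume (k i.castSucc) (k i.succ) ∧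
      (∫ x in k i.castSucc..k i.succ, (y x - u x)^2) ≤ σ^5 / 120 := by
    intro i
    obtain ⟨A, B, hAB⟩ := haff i
    set a := k i.castSucc with ha_def
    set b := k i.succ with hb_def
    have hab : a < b := hk (Fin.castSucc_lt_succ (i := i))
    have hcell : Set.Icc a b ⊆ Set.Icc (0:ℝ) 1 :=
      Set.Icc_subset_Icc (hmem _).1 (hmem _).2
    have hcello : Set.Ioo a b ⊆ Set.Ioo (0:ℝ) 1 := fun x hx =>
      ⟨lt_of_le_of_lt (hmem i.castSucc).1 hx.1, lt_of_lt_of_le hx.2 (hmem i.succ).2⟩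
    set Mi : ℝ := ⨆ ξ : Set.Icc a b, |deriv (deriv u) ξ| with hMi_def
    have hne : (Set.Icc a b).Nonempty := Set.nonempty_Icc.2 hab.le
    have hbdd : BddAbove (Set.range fun ξ : Set.Icc a b => |deriv (deriv u) ξ|) := by
      refine ⟨M, ?_⟩
      rintro _ ⟨ξ, rfl⟩
      exact hM ξ (hcell ξ.2)
    have hle : ∀ ξ ∈ Set.Icc a b, |deriv (deriv u) ξ| ≤ Mi := by
      intro ξ hξ
      exact le_ciSup (f := fun ξ : Set.Icc a b => |deriv (deriv u) ξ|) hbdd ⟨ξ, hξ⟩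
    have hMi0 : 0 ≤ Mi := le_trans (abs_nonneg _) (hle a ⟨le_rfl, hab.le⟩)
    set f : ℝ → ℝ := fun x => y x - u x with hf_def
    have hycont : ContinuousOn y (Set.Icc a b) :=
      ContinuousOn.congr (by fun_prop : ContinuousOn (fun x => A * x + B) (Set.Icc a b)) hAB
    have hfc : ContinuousOn f (Set.Icc a b) := hycont.sub (hu.continuousOn.mono hcell)
    have hyev : ∀ x ∈ Set.Ioo a b, y =ᶠ[nhds x] (fun t => A * t + B) := by
      intro x hx
      filter_upwards [isOpen_Ioo.mem_nhds hx] with t ht using hAB t (Set.Ioo_subset_Icc_self ht)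
    have h1 : ∀ x ∈ Set.Ioo a b, DifferentiableAt ℝ f x := by
      intro x hx
      have hy : DifferentiableAt ℝ y x :=
        (Filter.EventuallyEq.differentiableAt_iff (hyev x hx)).2 (by fun_prop)
      exact hy.sub (hu1 x (hcello hx))
    have hdf : ∀ t ∈ Set.Ioo a b, deriv f t = A - deriv u t := by
      intro t ht
      have hft : f =ᶠ[nhds t] (fun s => A * s + B - u s) := by
        filter_upwards [hyev t ht] with s hs using by simp [hf_def, hs]
      rw [hft.deriv_eq]
      have hlin : HasDerivAt (fun s : ℝ => A * s + B) A t := by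
        simpa using ((hasDerivAt_id t).const_mul A).add_const B
      exact (hlin.sub (hu1 t (hcello ht)).hasDerivAt).deriv
    have hdfev : ∀ t ∈ Set.Ioo a b, deriv f =ᶠ[nhds t] (fun s => A - deriv u s) := by
      intro t ht
      filter_upwards [isOpen_Ioo.mem_nhds ht] with s hs using hdf s hs
    have h2 : ∀ x ∈ Set.Ioo a b, DifferentiableAt ℝ (deriv f) x := by
      intro x hx
      refine (Filter.EventuallyEq.differentiableAt_iff (hdfev x hx)).2 ?_
      exact (differentiableAt_const A).sub (hu2 x (hcello hx))
    have hC : ∀ x ∈ Set.Ioo a b, |deriv (deriv f) x| ≤ Mi := by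
      intro x hx
      rw [(hdfev x hx).deriv_eq, deriv_const_sub, abs_neg]
      exact hle x (Set.Ioo_subset_Icc_self hx)
    have hfa : f a = 0 := by simp [hf_def, ha_def, hyk i.castSucc]
    have hfb : f b = 0 := by simp [hf_def, hb_def, hyk i.succ]
    have hbound := interp_err_s15 hab hfc h1 h2 hC hfa hfb
    have hint1 : IntervalIntegrable (fun x => (y x - u x)^2) volume a b := by
      apply ContinuousOn.intervalIntegrable
      rw [Set.uIcc_of_le hab.le]
      exact (hfc.pow 2 : ContinuousOn (fun x => f x ^ 2) _)
    refine ⟨hint1, ?_⟩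
    have hint2 : IntervalIntegrable (fun x => (Mi/2 * ((x - a) * (b - x)))^2) volume a b :=
      Continuous.intervalIntegrable (by fun_prop) _ _
    have hmono : (∫ x in a..b, (y x - u x)^2) ≤
        ∫ x in a..b, (Mi/2 * ((x - a) * (b - x)))^2 := by
      apply intervalIntegral.integral_mono_on hab.le hint1 hint2
      intro x hx
      have h := hbound x hx
      have := pow_le_pow_left₀ (abs_nonneg (f x)) h 2
      rw [sq_abs] at this
      simpa using this
    have hval : (∫ x in a..b, (Mi/2 * ((x - a) * (b - x)))^2) = (Mi/2)^2 * ((b - a)^5/30) := by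
      simp_rw [mul_pow]
      rw [intervalIntegral.integral_const_mul, int_poly]
    have hpow : Mi^2 * (b - a)^5 ≤ σ^5 := by
      have h0 : 0 ≤ (b - a) * Mi ^ ((2:ℝ)/5) :=
        mul_nonneg (by linarith) (Real.rpow_nonneg hMi0 _)
      have := pow_le_pow_left₀ h0 (hequi i) 5
      rw [mul_pow] at this
      have hMp : ((Mi ^ ((2:ℝ)/5)) ^ (5:ℕ) : ℝ) = Mi ^ 2 := by
        rw [← Real.rpow_natCast (Mi ^ ((2:ℝ)/5)) 5, ← Real.rpow_mul hMi0]
        norm_num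
      rw [hMp] at this
      linarith [this]
    have heq : (Mi/2)^2 * ((b - a)^5/30) = Mi^2 * (b - a)^5 / 120 := by ring
    calc (∫ x in a..b, (y x - u x)^2) ≤ (Mi/2)^2 * ((b - a)^5/30) := hmono.trans hval.le
    _ ≤ σ^5 / 120 := by rw [heq]; linarith
  -- sum over cells
  set K : ℕ → ℝ := fun n => k ⟨min n N, Nat.lt_succ_of_le (min_le_right n N)⟩ with hK_def
  have hKeq : ∀ n (h : n < N + 1), K n = k ⟨n, h⟩ := by
    intro n h
    simp only [hK_def]
    congr 1
    exact Fin.ext (Nat.min_eq_left (Nat.lt_succ_iff.mp h))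
  have hKc : ∀ i : Fin N, K i.1 = k i.castSucc ∧ K (i.1 + 1) = k i.succ := by
    intro i
    refine ⟨(hKeq i.1 (i.2.trans (Nat.lt_succ_self N))).trans ?_,
      (hKeq (i.1+1) (Nat.succ_lt_succ i.2)).trans ?_⟩
    · exact congrArg k (Fin.ext (by simp))
    · exact congrArg k (Fin.ext (by simp))
  have hint : ∀ j < N, IntervalIntegrable (fun x => (y x - u x)^2) volume (K j) (K (j+1)) := by
    intro j hj
    have h := (cell ⟨j, hj⟩).1
    rw [(hKc ⟨j, hj⟩).1, (hKc ⟨j, hj⟩).2]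
    exact h
  have hsplit : ∑ j ∈ Finset.range N, (∫ x in K j..K (j+1), (y x - u x)^2)
      = ∫ x in (K 0)..(K N), (y x - u x)^2 := intervalIntegral.sum_integral_adjacent_intervals hint
  have hK0 : K 0 = 0 := by
    rw [hKeq 0 (Nat.succ_pos N), ← hk0]
    exact congrArg k (Fin.ext (by simp))
  have hKN : K N = 1 := by
    rw [hKeq N (Nat.lt_succ_self N), ← hkN]
    exact congrArg k (Fin.ext (by simp [Fin.last]))
  rw [← hK0, ← hKN, ← hsplit]
  have hsum : ∑ j ∈ Finset.range N, (∫ x in K j..K (j+1), (y x - u x)^2)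
      ≤ ∑ j ∈ Finset.range N, σ^5 / 120 := by
    apply Finset.sum_le_sum
    intro j hj
    have hj' := Finset.mem_range.1 hj
    rw [(hKc ⟨j, hj'⟩).1, (hKc ⟨j, hj'⟩).2]
    exact (cell ⟨j, hj'⟩).2
  rw [Finset.sum_const, Finset.card_range] at hsum
  calc ∑ j ∈ Finset.range N, (∫ x in K j..K (j+1), (y x - u x)^2)
      ≤ (N : ℝ) * (σ^5 / 120) := by simpa [nsmul_eq_mul] using hsum
  _ = ((N : ℝ)/120) * σ^5 := by ring
end

section
/- Let u(x) = x^{2/3} and knots k_i = (i/N)^{15/7} for i = 0,...,N. Then there is a constant C > 0 independent of N such that the piecewise linear interpolant y of u at these knots satisfies ∫₀¹ (y(x)-u(x))² dx ≤ C/N⁴. -/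
open Real Set MeasureTheory intervalIntegral

lemma rt7 (x : ℝ) (hx : 0 ≤ x) (n : ℕ) : (x ^ ((1:ℝ)/7)) ^ n = x ^ ((n:ℝ)/7) := by
  rw [← Real.rpow_natCast (x ^ ((1:ℝ)/7)) n, ← Real.rpow_mul hx]
  congr 1; ring

lemma key57 (c d : ℝ) (hc : 1 ≤ c) (hcd : c ≤ d) (h7 : d^7 = c^7 + 1) :
    7*c^2*(d^5 - c^5) ≤ 5 := by
  have hc0 : (0:ℝ) ≤ c := by linarith
  have hd0 : (0:ℝ) ≤ d := by linarith
  have hP : (0:ℝ) ≤ 5*d^5+10*c*d^4+8*c^2*d^3+6*c^3*d^2+4*c^4*d+2*c^5 := by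
    have h1 := pow_nonneg hd0 5
    have h2 := mul_nonneg hc0 (pow_nonneg hd0 4)
    have h3 := mul_nonneg (pow_nonneg hc0 2) (pow_nonneg hd0 3)
    have h4 := mul_nonneg (pow_nonneg hc0 3) (pow_nonneg hd0 2)
    have h5 := mul_nonneg (pow_nonneg hc0 4) hd0
    have h6 := pow_nonneg hc0 5
    linarith
  nlinarith [mul_nonneg (sq_nonneg (d-c)) hP]

lemma d5le (c d : ℝ) (hc : 1 ≤ c) (hcd : c ≤ d) (h7 : d^7 = c^7 + 1) : d^5 ≤ 2*c^5 := by
  have hc0 : (0:ℝ) < c := by linarith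
  have hd0 : (0:ℝ) ≤ d := by linarith
  have hc7 : (1:ℝ) ≤ c^7 := by
    have := pow_le_pow_left₀ (by norm_num : (0:ℝ) ≤ 1) hc 7
    simpa using this
  have h1 : d^5*c^7 ≤ d^7*c^5 := by
    nlinarith [mul_nonneg (mul_nonneg (pow_nonneg hd0 5) (pow_nonneg hc0.le 5))
      (by nlinarith : (0:ℝ) ≤ d^2 - c^2)]
  have h2 : d^5 * c^7 ≤ (2*c^5) * c^7 := by nlinarith [pow_nonneg hc0.le 5]
  exact le_of_mul_le_mul_right h2 (pow_pos hc0 7)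

lemma cube_ptwise (α β t A B : ℝ) (hα : 0 < α) (hαβ : α < β) (hαt : α ≤ t) (htβ : t ≤ β)
    (ha : A * α^3 + B = α^2) (hb : A * β^3 + B = β^2) :
    (A * t^3 + B - t^2)^2 ≤ ((β-α)^2*(2*β+α)/(3*α))^2 := by
  have hβ : 0 < β := hα.trans hαβ
  have ht : 0 < t := lt_of_lt_of_le hα hαt
  have hd : 0 < β^3 - α^3 := by nlinarith [mul_pos (sub_pos.2 hαβ) (mul_pos hα hβ), sq_nonneg (β-α), mul_pos hα hβ]
  have hA : A * (β^3 - α^3) = β^2 - α^2 := by linear_combination hb - ha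
  -- chord below
  have hchord : A * t^3 + B ≤ t^2 := by
    have h2 : (t^2-α^2)*(β^3-α^3) - (A*t^3 - A*α^3)*(β^3-α^3)
        = (β-α)*((t-α)*((β-t)*(β*t+α*β+α*t))) := by
      linear_combination (α^3 - t^3) * hA
    have h1 : 0 ≤ (β-α)*((t-α)*((β-t)*(β*t+α*β+α*t))) := by
      apply mul_nonneg (by linarith)
      apply mul_nonneg (by linarith)
      apply mul_nonneg (by linarith)
      nlinarith
    have h3 : (A*t^3 - A*α^3)*(β^3-α^3) ≤ (t^2-α^2)*(β^3-α^3) := by linarith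
    have h4 : A*t^3 - A*α^3 ≤ t^2-α^2 := le_of_mul_le_mul_right h3 hd
    linarith
  -- tangent above
  have htan : 3*α*(t^2-α^2) ≤ 2*(t^3-α^3) := by
    nlinarith [mul_nonneg (sq_nonneg (t-α)) (by linarith : (0:ℝ) ≤ 2*t+α)]
  have hAub : 3*α*A ≤ 2 := by
    have h6 : 3*α*(β^2-α^2) ≤ 2*(β^3-α^3) := by
      nlinarith [mul_nonneg (sq_nonneg (β-α)) (by linarith : (0:ℝ) ≤ 2*β+α)]
    have h7 : 3*α*A*(β^3-α^3) ≤ 2*(β^3-α^3) := by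
      calc 3*α*A*(β^3-α^3) = 3*α*(A*(β^3-α^3)) := by ring
        _ = 3*α*(β^2-α^2) := by rw [hA]
        _ ≤ 2*(β^3-α^3) := h6
    exact le_of_mul_le_mul_right h7 hd
  have hupper : 3*α*(t^2 - (A*t^3+B)) ≤ (β-α)^2*(2*β+α) := by
    have e1 : 3*α*(t^2-(A*t^3+B)) = 3*α*(t^2-α^2) - (2*(t^3-α^3) - (2-3*α*A)*(t^3-α^3)) := by
      linear_combination (-3*α) * ha
    have h8 : t^3 ≤ β^3 := pow_le_pow_left₀ ht.le htβ 3
    have h9 : (2-3*α*A)*(t^3-α^3) ≤ (2-3*α*A)*(β^3-α^3) :=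
      mul_le_mul_of_nonneg_left (by linarith) (by linarith)
    have h10 : (2-3*α*A)*(β^3-α^3) = (β-α)^2*(2*β+α) := by
      linear_combination (-3*α) * hA
    linarith
  have hM0 : 0 ≤ (β-α)^2*(2*β+α)/(3*α) := by
    apply div_nonneg _ (by linarith)
    apply mul_nonneg (sq_nonneg _) (by linarith)
  have hE : t^2 - (A*t^3+B) ≤ (β-α)^2*(2*β+α)/(3*α) := by
    rw [le_div_iff₀ (by linarith : (0:ℝ) < 3*α)]
    linarith [hupper]
  apply sq_le_sq'
  · linarith
  · linarith

set_option maxHeartbeats 1000000 in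
lemma final_bound (α β I n : ℝ) (hαpos : 0 < α) (hαβ : α < β) (hI1 : 1 ≤ I) (hn : 0 < n)
    (hX : 7*I*(β-α) ≤ 5*α) (hβ2α : β ≤ 2*α) (hα7 : α^7 = I^5/n^5) :
    (β^3-α^3)*((β-α)^2*(2*β+α)/(3*α))^2 ≤ 20/n^5 := by
  set M : ℝ := (β-α)^2*(2*β+α)/(3*α) with hMdef
  have hM0 : 0 ≤ M :=
    div_nonneg (mul_nonneg (sq_nonneg _) (by linarith)) (by linarith)
  set X : ℝ := β - α with hXdef
  have hX0 : 0 ≤ X := by rw [hXdef]; linarith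
  have hbb : β^3-α^3 ≤ 7*α^2*X := by
    have h4b : β^2+α*β+α^2 ≤ 7*α^2 := by nlinarith
    nlinarith [mul_le_mul_of_nonneg_left h4b hX0]
  have hM5 : M ≤ (5/3)*X^2 := by
    rw [hMdef, div_le_iff₀ (by linarith : (0:ℝ) < 3*α)]
    have h := mul_le_mul_of_nonneg_left (show 2*β+α ≤ 5*α by linarith) (sq_nonneg (β-α))
    calc (β-α)^2*(2*β+α) ≤ (β-α)^2*(5*α) := h
      _ = 5/3*X^2*(3*α) := by rw [hXdef]; ring
  have hM2 : M^2 ≤ (25/9)*X^4 := by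
    have h := pow_le_pow_left₀ hM0 hM5 2
    calc M^2 ≤ ((5/3)*X^2)^2 := h
      _ = (25/9)*X^4 := by ring
  have hI : (β^3-α^3)*M^2 ≤ (175/9)*α^2*X^5 := by
    have h1 : (β^3-α^3)*M^2 ≤ (7*α^2*X)*((25/9)*X^4) := by
      apply mul_le_mul hbb hM2 (sq_nonneg M)
      positivity
    calc (β^3-α^3)*M^2 ≤ (7*α^2*X)*((25/9)*X^4) := h1
      _ = (175/9)*α^2*X^5 := by ring
  have hIpos : (0:ℝ) < I := by linarith
  have h7i5 : (0:ℝ) < (7*I)^5 := by positivity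
  have h5 : (7*I*X)^5 ≤ (5*α)^5 := pow_le_pow_left₀ (by positivity) hX 5
  apply le_of_mul_le_mul_right _ h7i5
  calc (β^3-α^3)*M^2*(7*I)^5 ≤ ((175/9)*α^2*X^5)*(7*I)^5 :=
        mul_le_mul_of_nonneg_right hI h7i5.le
    _ = (175/9)*α^2*((7*I*X)^5) := by ring
    _ ≤ (175/9)*α^2*((5*α)^5) := by
        apply mul_le_mul_of_nonneg_left h5 (by positivity)
    _ = (546875/9)*α^7 := by ring
    _ = (546875/9)*(I^5/n^5) := by rw [hα7]
    _ ≤ (336140:ℝ)*(I^5/n^5) := by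
        apply mul_le_mul_of_nonneg_right (by norm_num) (by positivity)
    _ = 20/n^5*(7*I)^5 := by field_simp; ring

lemma piece (N i : ℕ) (hN : 1 ≤ N) (hiN : i < N) (A B : ℝ)
    (ha : A * (((i:ℝ)/N) ^ ((15:ℝ)/7)) + B = (((i:ℝ)/N) ^ ((15:ℝ)/7)) ^ ((2:ℝ)/3))
    (hb : A * ((((i:ℝ)+1)/N) ^ ((15:ℝ)/7)) + B
        = ((((i:ℝ)+1)/N) ^ ((15:ℝ)/7)) ^ ((2:ℝ)/3)) :
    ∫ x in (((i:ℝ)/N) ^ ((15:ℝ)/7))..((((i:ℝ)+1)/N) ^ ((15:ℝ)/7)),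
      (A*x + B - x ^ ((2:ℝ)/3))^2 ≤ 20/(N:ℝ)^5 := by
  have hNp : (0:ℝ) < N := by exact_mod_cast Nat.pos_of_ne_zero (by omega)
  have hv0 : (0:ℝ) ≤ (i:ℝ)/N := by positivity
  have hw0 : (0:ℝ) < ((i:ℝ)+1)/N := by positivity
  have hvw : (i:ℝ)/N ≤ ((i:ℝ)+1)/N := by gcongr; linarith
  set a : ℝ := ((i:ℝ)/N) ^ ((15:ℝ)/7) with hadef
  set b : ℝ := (((i:ℝ)+1)/N) ^ ((15:ℝ)/7) with hbdef
  have hab : a ≤ b := Real.rpow_le_rpow hv0 hvw (by norm_num)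
  have hgc : Continuous (fun x : ℝ => (A*x + B - x ^ ((2:ℝ)/3))^2) := by
    have h23 : Continuous fun x : ℝ => x ^ ((2:ℝ)/3) :=
      Real.continuous_rpow_const (by norm_num)
    exact (((continuous_const.mul continuous_id).add continuous_const).sub h23).pow 2
  -- find uniform pointwise bound M with (b-a)*M^2 ≤ 20/N^5
  obtain ⟨M, hM0, hpt, hbM⟩ : ∃ M : ℝ, 0 ≤ M ∧
      (∀ x ∈ Icc a b, (A*x + B - x ^ ((2:ℝ)/3))^2 ≤ M^2) ∧ (b-a)*M^2 ≤ 20/(N:ℝ)^5 := by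
    rcases Nat.eq_zero_or_pos i with hi | hi
    · -- first interval
      subst hi
      have ha0 : a = 0 := by rw [hadef]; norm_num
      have hbpos : 0 < b := Real.rpow_pos_of_pos hw0 _
      have hB : B = 0 := by
        rw [ha0] at ha
        simpa [Real.zero_rpow (show ((2:ℝ)/3) ≠ 0 by norm_num)] using ha
      have hUb : A * b = b ^ ((2:ℝ)/3) := by rw [hB] at hb; linarith
      have hU0 : 0 ≤ b ^ ((2:ℝ)/3) := Real.rpow_nonneg hbpos.le _
      have hA0 : 0 ≤ A := by
        have h3 : 0 ≤ A*b := by rw [hUb]; exact hU0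
        exact (mul_nonneg_iff_of_pos_right hbpos).mp h3
      refine ⟨b ^ ((2:ℝ)/3), hU0, ?_, ?_⟩
      · intro x hx
        rw [ha0] at hx
        have hx0 : 0 ≤ x := hx.1
        have h1 : 0 ≤ A * x := mul_nonneg hA0 hx0
        have h2 : A * x ≤ b ^ ((2:ℝ)/3) := by
          calc A*x ≤ A*b := mul_le_mul_of_nonneg_left hx.2 hA0
            _ = _ := hUb
        have h3 : x ^ ((2:ℝ)/3) ≤ b ^ ((2:ℝ)/3) := Real.rpow_le_rpow hx0 hx.2 (by norm_num)
        have h4 : 0 ≤ x ^ ((2:ℝ)/3) := Real.rpow_nonneg hx0 _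
        rw [hB]
        apply sq_le_sq' <;> linarith
      · rw [ha0, sub_zero]
        have hs0 : (0:ℝ) < 1/(N:ℝ) := by positivity
        have hb1 : b = (1/(N:ℝ)) ^ ((15:ℝ)/7) := by rw [hbdef]; norm_num
        have hb23 : b ^ ((2:ℝ)/3) = (1/(N:ℝ)) ^ ((10:ℝ)/7) := by
          rw [hb1, ← Real.rpow_mul hs0.le]; norm_num
        have h1 : b * (b ^ ((2:ℝ)/3))^2 = (1/(N:ℝ)) ^ ((5:ℝ)) := by
          rw [hb23, hb1, ← Real.rpow_natCast ((1/(N:ℝ)) ^ ((10:ℝ)/7)) 2,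
            ← Real.rpow_mul hs0.le, ← Real.rpow_add hs0]
          norm_num
        rw [h1, show ((5:ℝ)) = ((5:ℕ):ℝ) by norm_num, Real.rpow_natCast, div_pow, one_pow]
        gcongr <;> norm_num
    · -- interior intervals
      have hi1 : (1:ℝ) ≤ (i:ℝ) := by exact_mod_cast hi
      have hi0 : (0:ℝ) ≤ (i:ℝ) := by linarith
      have hipos : (0:ℝ) < (i:ℝ) := by linarith
      set c : ℝ := (i:ℝ) ^ ((1:ℝ)/7) with hcdef
      set d : ℝ := ((i:ℝ)+1) ^ ((1:ℝ)/7) with hddef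
      set m : ℝ := (N:ℝ) ^ ((1:ℝ)/7) with hmdef
      have hc7 : c^7 = (i:ℝ) := by rw [hcdef, rt7 _ hi0]; norm_num
      have hd7 : d^7 = (i:ℝ)+1 := by rw [hddef, rt7 _ (by linarith)]; norm_num
      have hm7 : m^7 = (N:ℝ) := by rw [hmdef, rt7 _ hNp.le]; norm_num
      have hmpos : 0 < m := Real.rpow_pos_of_pos hNp _
      have hc1 : (1:ℝ) ≤ c := by
        rw [hcdef]
        calc (1:ℝ) = (1:ℝ) ^ ((1:ℝ)/7) := (Real.one_rpow _).symm
          _ ≤ (i:ℝ) ^ ((1:ℝ)/7) := Real.rpow_le_rpow (by norm_num) hi1 (by norm_num)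
      have hcd : c ≤ d := Real.rpow_le_rpow hi0 (by linarith) (by norm_num)
      have hd7' : d^7 = c^7 + 1 := by rw [hd7, hc7]
      set w : ℝ := ((i:ℝ)/N) ^ ((1:ℝ)/7) with hwdef
      set z : ℝ := (((i:ℝ)+1)/N) ^ ((1:ℝ)/7) with hzdef
      have hwcm : w = c/m := by rw [hwdef, Real.div_rpow hi0 hNp.le]
      have hzdm : z = d/m := by rw [hzdef, Real.div_rpow (by linarith) hNp.le]
      set α : ℝ := w^5 with hαdef
      set β : ℝ := z^5 with hβdef
      have hwpos : 0 < w := Real.rpow_pos_of_pos (by positivity) _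
      have hαpos : 0 < α := by positivity
      have hwz : w < z := by
        apply Real.rpow_lt_rpow hv0 _ (by norm_num)
        gcongr <;> linarith
      have hαβ : α < β := by
        rw [hαdef, hβdef]
        exact pow_lt_pow_left₀ hwz hwpos.le (by norm_num)
      have hβpos : 0 < β := lt_trans hαpos hαβ
      have ha3 : a = α^3 := by
        rw [hadef, hαdef, ← pow_mul, show 5*3 = 15 from rfl, rt7 _ hv0]; norm_num
      have hb3 : b = β^3 := by
        rw [hbdef, hβdef, ← pow_mul, show 5*3 = 15 from rfl, rt7 _ hw0.le]; norm_num
      have hua : a ^ ((2:ℝ)/3) = α^2 := by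
        rw [hadef, ← Real.rpow_mul hv0, hαdef, ← pow_mul, show 5*2 = 10 from rfl,
          rt7 _ hv0]
        norm_num
      have hub : b ^ ((2:ℝ)/3) = β^2 := by
        rw [hbdef, ← Real.rpow_mul hw0.le, hβdef, ← pow_mul, show 5*2 = 10 from rfl,
          rt7 _ hw0.le]
        norm_num
      have haA : A * α^3 + B = α^2 := by rw [← ha3, ← hua]; exact ha
      have hbB : A * β^3 + B = β^2 := by rw [← hb3, ← hub]; exact hb
      set M : ℝ := (β-α)^2*(2*β+α)/(3*α) with hMdef
      have hM0 : 0 ≤ M := by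
        apply div_nonneg (mul_nonneg (sq_nonneg _) (by linarith)) (by linarith)
      refine ⟨M, hM0, ?_, ?_⟩
      · intro x hx
        rw [ha3, hb3] at hx
        have hxpos : 0 < x := lt_of_lt_of_le (by positivity) hx.1
        set t : ℝ := x ^ ((1:ℝ)/3) with htdef
        have ht0 : 0 ≤ t := Real.rpow_nonneg hxpos.le _
        have ht3 : t^3 = x := by
          rw [htdef, ← Real.rpow_natCast (x ^ ((1:ℝ)/3)) 3, ← Real.rpow_mul hxpos.le]
          norm_num
        have ht2 : t^2 = x ^ ((2:ℝ)/3) := by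
          rw [htdef, ← Real.rpow_natCast (x ^ ((1:ℝ)/3)) 2, ← Real.rpow_mul hxpos.le]
          norm_num
        have hαt : α ≤ t := by
          apply le_of_pow_le_pow_left₀ (by norm_num : 3 ≠ 0) ht0
          rw [ht3]; exact hx.1
        have htβ : t ≤ β := by
          apply le_of_pow_le_pow_left₀ (by norm_num : 3 ≠ 0) hβpos.le
          rw [ht3]; exact hx.2
        have := cube_ptwise α β t A B hαpos hαβ hαt htβ haA hbB
        rwa [ht3, ht2] at this
      · -- (b-a) * M^2 ≤ 20/N^5
        rw [ha3, hb3, hMdef]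
        have hm5 : (0:ℝ) < m^5 := pow_pos hmpos 5
        have eα : α*m^5 = c^5 := by
          rw [hαdef, hwcm, div_pow, div_mul_cancel₀]
          exact ne_of_gt hm5
        have eβ : β*m^5 = d^5 := by
          rw [hβdef, hzdm, div_pow, div_mul_cancel₀]
          exact ne_of_gt hm5
        have h57 := key57 c d hc1 hcd hd7'
        have h2c := d5le c d hc1 hcd hd7'
        have hc0 : (0:ℝ) ≤ c := by linarith
        have hX : 7*(i:ℝ)*(β-α) ≤ 5*α := by
          rw [← mul_le_mul_iff_of_pos_right hm5]
          calc 7*(i:ℝ)*(β-α)*m^5 = 7*c^7*(β*m^5 - α*m^5) := by rw [hc7]; ring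
            _ = c^5*(7*c^2*(d^5-c^5)) := by rw [eα, eβ]; ring
            _ ≤ c^5*5 := mul_le_mul_of_nonneg_left h57 (pow_nonneg hc0 5)
            _ = 5*(α*m^5) := by rw [eα]; ring
            _ = 5*α*m^5 := by ring
        have hβ2α : β ≤ 2*α := by
          rw [← mul_le_mul_iff_of_pos_right hm5]
          calc β*m^5 = d^5 := eβ
            _ ≤ 2*c^5 := h2c
            _ = 2*(α*m^5) := by rw [eα]
            _ = 2*α*m^5 := by ring
        have hα7 : α^7 = (i:ℝ)^5/(N:ℝ)^5 := by
          have e1 : α^7 = (c^7)^5/(m^7)^5 := by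
            rw [hαdef, hwcm]
            field_simp
          rw [e1, hc7, hm7]
        exact final_bound α β (i:ℝ) (N:ℝ) hαpos hαβ hi1 hNp hX hβ2α hα7
  calc ∫ x in a..b, (A*x + B - x ^ ((2:ℝ)/3))^2
      ≤ ∫ _x in a..b, M^2 := by
        apply intervalIntegral.integral_mono_on hab (hgc.intervalIntegrable a b)
          intervalIntegrable_const hpt
    _ = (b-a)*M^2 := by rw [intervalIntegral.integral_const, smul_eq_mul]
    _ ≤ 20/(N:ℝ)^5 := hbM

set_option maxHeartbeats 1000000 in
theorem stmt_16 :
    ∃ C : ℝ, 0 < C ∧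
      ∀ N : ℕ, 1 ≤ N → ∀ y : ℝ → ℝ,
        (∀ i : ℕ, i ≤ N →
          y (((i : ℝ)/N) ^ ((15:ℝ)/7)) = (((i : ℝ)/N) ^ ((15:ℝ)/7)) ^ ((2:ℝ)/3)) →
        (∀ i : ℕ, i < N → ∃ A B : ℝ,
          ∀ x ∈ Set.Icc (((i : ℝ)/N) ^ ((15:ℝ)/7)) ((((i : ℝ)+1)/N) ^ ((15:ℝ)/7)),
            y x = A * x + B) →
        ∫ x in (0:ℝ)..1, (y x - x ^ ((2:ℝ)/3))^2 ≤ C / (N : ℝ)^4 := by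
  refine ⟨100, by norm_num, ?_⟩
  intro N hN y hknot hlin
  have hNp : (0:ℝ) < N := by
    have : 0 < N := hN
    exact_mod_cast this
  set k : ℕ → ℝ := fun j => ((j:ℝ)/N) ^ ((15:ℝ)/7) with hk
  have hkk : ∀ j : ℕ, k (j+1) = (((j:ℝ)+1)/N) ^ ((15:ℝ)/7) := by
    intro j; simp only [hk]; push_cast; ring_nf
  have hkmono : ∀ j : ℕ, k j ≤ k (j+1) := by
    intro j
    rw [hkk j]
    apply Real.rpow_le_rpow (by positivity) _ (by norm_num)
    gcongr <;> linarith
  have hepe : ∀ j : ℕ, j < N → ∀ A B : ℝ,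
      (∀ x ∈ Set.Icc (((j : ℝ)/N) ^ ((15:ℝ)/7)) ((((j : ℝ)+1)/N) ^ ((15:ℝ)/7)),
        y x = A * x + B) →
      EqOn (fun x => (y x - x ^ ((2:ℝ)/3))^2)
        (fun x => (A*x + B - x ^ ((2:ℝ)/3))^2) (Icc (k j) (k (j+1))) := by
    intro j hj A B hAB x hx
    rw [hkk j] at hx
    simp only
    rw [hAB x hx]
  have hint : ∀ j, j < N → IntervalIntegrable (fun x => (y x - x ^ ((2:ℝ)/3))^2)
      volume (k j) (k (j+1)) := by
    intro j hj
    obtain ⟨A, B, hAB⟩ := hlin j hj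
    have hgc : Continuous (fun x : ℝ => (A*x + B - x ^ ((2:ℝ)/3))^2) := by
      have h23 : Continuous fun x : ℝ => x ^ ((2:ℝ)/3) :=
        Real.continuous_rpow_const (by norm_num)
      exact (((continuous_const.mul continuous_id).add continuous_const).sub h23).pow 2
    rw [intervalIntegrable_iff_integrableOn_Icc_of_le (hkmono j)]
    apply MeasureTheory.IntegrableOn.congr_fun
      (hgc.integrableOn_Icc) _ measurableSet_Icc
    exact fun x hx => ((hepe j hj A B hAB) hx).symm
  have hsplit := intervalIntegral.sum_integral_adjacent_intervals (μ := volume)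
    (f := fun x => (y x - x ^ ((2:ℝ)/3))^2) hint
  have hk0 : k 0 = 0 := by
    simp only [hk, Nat.cast_zero, zero_div]
    exact Real.zero_rpow (by norm_num)
  have hkN : k N = 1 := by
    simp only [hk, div_self (ne_of_gt hNp)]
    exact Real.one_rpow _
  have hstep : ∫ x in (0:ℝ)..1, (y x - x ^ ((2:ℝ)/3))^2
      = ∑ j ∈ Finset.range N, ∫ x in (k j)..(k (j+1)), (y x - x ^ ((2:ℝ)/3))^2 := by
    rw [hsplit, hk0, hkN]
  rw [hstep]
  have hbound : ∀ j ∈ Finset.range N,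
      (∫ x in (k j)..(k (j+1)), (y x - x ^ ((2:ℝ)/3))^2) ≤ 20/(N:ℝ)^5 := by
    intro j hj
    have hjN : j < N := Finset.mem_range.mp hj
    obtain ⟨A, B, hAB⟩ := hlin j hjN
    have hcongr : ∫ x in (k j)..(k (j+1)), (y x - x ^ ((2:ℝ)/3))^2
        = ∫ x in (k j)..(k (j+1)), (A*x + B - x ^ ((2:ℝ)/3))^2 := by
      apply intervalIntegral.integral_congr
      rw [Set.uIcc_of_le (hkmono j)]
      exact hepe j hjN A B hAB
    rw [hcongr, hkk j]
    have haend : A * (((j:ℝ)/N) ^ ((15:ℝ)/7)) + B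
        = (((j:ℝ)/N) ^ ((15:ℝ)/7)) ^ ((2:ℝ)/3) := by
      have h1 := hknot j (le_of_lt hjN)
      have h2 := hAB (((j:ℝ)/N) ^ ((15:ℝ)/7))
        ⟨le_refl _, by rw [← hkk j]; exact hkmono j⟩
      rw [← h2, h1]
    have hbend : A * ((((j:ℝ)+1)/N) ^ ((15:ℝ)/7)) + B
        = ((((j:ℝ)+1)/N) ^ ((15:ℝ)/7)) ^ ((2:ℝ)/3) := by
      have h1 := hknot (j+1) hjN
      have h2 := hAB ((((j:ℝ)+1)/N) ^ ((15:ℝ)/7))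
        ⟨by rw [← hkk j]; exact hkmono j, le_refl _⟩
      push_cast at h1
      rw [← h2]
      exact h1
    exact piece N j hN hjN A B haend hbend
  calc ∑ j ∈ Finset.range N, ∫ x in (k j)..(k (j+1)), (y x - x ^ ((2:ℝ)/3))^2
      ≤ ∑ _j ∈ Finset.range N, 20/(N:ℝ)^5 := Finset.sum_le_sum hbound
    _ = N * (20/(N:ℝ)^5) := by
        rw [Finset.sum_const, Finset.card_range, nsmul_eq_mul]
    _ ≤ 100 / (N:ℝ)^4 := by
        have hN0 : (N:ℝ) ≠ 0 := ne_of_gt hNp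
        have heq : (N:ℝ) * (20/(N:ℝ)^5) = 20/(N:ℝ)^4 := by
          field_simp
        rw [heq, div_le_div_iff₀ (by positivity) (by positivity)]
        nlinarith [pow_pos hNp 4]
end
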